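/- arXiv:math/0702719 — 8 statements merged into one kernel-verified Lean document; each statement's English description precedes it below -/
import Mathlib

section
/- Let π : G → G'' be a continuous open surjective homomorphism of first-countable topological groups, let G' = ker(π) carry the subspace topology, and let H be a subgroup of G. Set H' = H ∩ G' and H'' = π(H). Assume (i) H' is dense in G', and (ii) there exists an open subgroup U of G'' such that π⁻¹(U) is compact. Then H is dense in π⁻¹(cl(H'')); equivalently, the closure of H in G equals the preimage under π of the closure of H'' in G''. -/
/-- Naumann's approximation lemma.  Let `π : G → G''` be a continuous open surjective
homomorphism of first-countable topological groups, with kernel `G' = ker π` (carrying the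
subspace topology), and let `H ≤ G`.  If `H ∩ G'` is dense in `G'`, and there is an open
subgroup `U ≤ G''` whose preimage `π⁻¹(U)` is compact, then the closure of `H` in `G` is
exactly the preimage under `π` of the closure of `π(H)` in `G''`; that is, `H` is dense in
`π⁻¹(cl(π(H)))`. -/
theorem stmt_0 {G G'' : Type*} [Group G] [TopologicalSpace G] [IsTopologicalGroup G]
    [FirstCountableTopology G]
    [Group G''] [TopologicalSpace G''] [IsTopologicalGroup G'']
    [FirstCountableTopology G'']
    (π : G →* G'') (hcont : Continuous π) (hopen : IsOpenMap π)
    (hsurj : Function.Surjective π)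
    (H : Subgroup G)
    (hdense : (π.ker : Set G) ⊆ closure ((H : Set G) ∩ (π.ker : Set G)))
    (U : Subgroup G'') (hU : IsOpen (U : Set G''))
    (hUcpt : IsCompact (π ⁻¹' (U : Set G''))) :
    closure (H : Set G) = π ⁻¹' closure (π '' (H : Set G)) := by
  apply subset_antisymm
  · exact closure_minimal (fun x hx => subset_closure ⟨x, hx, rfl⟩)
      (isClosed_closure.preimage hcont)
  · intro g hg
    have hg' : π g ∈ closure (π '' (H : Set G)) := hg
    obtain ⟨y, hy, hyt⟩ := mem_closure_iff_seq_limit.1 hg'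
    choose h hh hπh using hy
    have h1 : Filter.Tendsto (fun n => y n * (π g)⁻¹) Filter.atTop (nhds 1) := by
      simpa using hyt.mul_const (π g)⁻¹
    have hev : ∀ᶠ n in Filter.atTop, y n * (π g)⁻¹ ∈ (U : Set G'') :=
      h1 (hU.mem_nhds U.one_mem)
    obtain ⟨N, hN⟩ := Filter.eventually_atTop.1 hev
    set z : ℕ → G := fun n => h (n + N) * g⁻¹ with hz
    have hzK : ∀ n, z n ∈ π ⁻¹' (U : Set G'') := by
      intro n
      simp only [hz, Set.mem_preimage, map_mul, map_inv, hπh]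
      exact hN (n + N) (Nat.le_add_left N n)
    obtain ⟨x, hxK, φ, hφ, hzx⟩ := hUcpt.tendsto_subseq hzK
    -- π x is inseparable from 1
    have hπz : Filter.Tendsto (fun n => π (z (φ n))) Filter.atTop (nhds 1) := by
      have h2 : Filter.Tendsto (fun n => π (z n)) Filter.atTop (nhds 1) := by
        have : (fun n => π (z n)) = fun n => y (n + N) * (π g)⁻¹ := by
          funext n; simp [hz, hπh]
        rw [this]
        exact h1.comp (Filter.tendsto_add_atTop_nat N)
      exact h2.comp hφ.tendsto_atTop
    have hπz' : Filter.Tendsto (fun n => π (z (φ n))) Filter.atTop (nhds (π x)) :=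
      (hcont.tendsto x).comp hzx
    have hins : Inseparable (π x) (1 : G'') :=
      tendsto_nhds_unique_inseparable hπz' hπz
    have hπx1 : π x ∈ closure ({1} : Set G'') := by
      exact hins.specializes'.mem_closure
    -- by openness of π, x ∈ closure (ker π)
    have hxker : x ∈ closure (π.ker : Set G) := by
      rw [mem_closure_iff]
      intro V hV hxV
      obtain ⟨w, ⟨v, hvV, rfl⟩, hw1⟩ :=
        mem_closure_iff.1 hπx1 (π '' V) (hopen V hV) ⟨x, hxV, rfl⟩
      exact ⟨v, hvV, by simpa [π.mem_ker] using hw1⟩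
    have hxH : x ∈ closure (H : Set G) :=
      closure_mono Set.inter_subset_left
        (closure_minimal hdense isClosed_closure hxker)
    -- x * g ∈ closure H
    have hxgH : x * g ∈ closure (H : Set G) := by
      refine mem_closure_of_tendsto (hzx.mul_const g) (Filter.Eventually.of_forall ?_)
      intro n
      simpa [hz] using hh (φ n + N)
    -- closure H is a subgroup
    have hfin : x⁻¹ * (x * g) ∈ closure (H : Set G) := by
      have h1 : x ∈ H.topologicalClosure := hxH
      have h2 : x * g ∈ H.topologicalClosure := hxgH
      exact mul_mem (inv_mem h1) h2
    simpa using hfin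
end

section
/- Let G be a group, H a subgroup of G, and H₁, H₂ subgroups of H. Fix a set R ⊆ H of representatives for the double cosets H₁\H/H₂. For each h ∈ R, the formulas g(H₁ ∩ hH₂h⁻¹) ↦ gH₁ and g(H₁ ∩ hH₂h⁻¹) ↦ ghH₂ give well-defined G-equivariant maps G/(H₁ ∩ hH₂h⁻¹) → G/H₁ and G/(H₁ ∩ hH₂h⁻¹) → G/H₂ of left coset G-sets, and the induced G-equivariant map from the disjoint union ∐_{h ∈ R} G/(H₁ ∩ hH₂h⁻¹) to the fiber product G/H₁ ×_{G/H} G/H₂ = {(xH₁, yH₂) : xH = yH}, sending g(H₁ ∩ hH₂h⁻¹) to (gH₁, ghH₂), is a bijection. In other words, the evident commutative square of G-sets with these corners is a pullback square. -/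
/-- **Pullback decomposition of orbits** (Lemma on `G`-set pullbacks).  Let `H ≤ G` and let
`H₁, H₂ ≤ H`.  Fix a set `R ⊆ H` of representatives for the double cosets `H₁\H/H₂`.  Then
the map `∐_{h ∈ R} G/(H₁ ∩ hH₂h⁻¹) → G/H₁ ×_{G/H} G/H₂`, sending `g(H₁ ∩ hH₂h⁻¹)` to
`(gH₁, ghH₂)`, is a well-defined `G`-equivariant bijection; i.e. the evident square of
`G`-sets is a pullback. -/
theorem stmt_1 {G : Type*} [Group G] (H H₁ H₂ : Subgroup G)
    (h1 : H₁ ≤ H) (h2 : H₂ ≤ H)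
    (R : Set G) (hR : R ⊆ (H : Set G))
    (hrep : ∀ x ∈ H, ∃! r, r ∈ R ∧ ∃ a ∈ H₁, ∃ b ∈ H₂, x = a * r * b) :
    ∃ Φ : (Σ h : R, G ⧸ (H₁ ⊓ Subgroup.map (MulAut.conj (h : G)).toMonoidHom H₂)) →
        {p : (G ⧸ H₁) × (G ⧸ H₂) //
          ∃ x y : G, p.1 = QuotientGroup.mk x ∧ p.2 = QuotientGroup.mk y ∧
            (QuotientGroup.mk x : G ⧸ H) = QuotientGroup.mk y},
      (∀ (h : R) (g : G),
        (Φ ⟨h, QuotientGroup.mk g⟩).val =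
          (QuotientGroup.mk g, QuotientGroup.mk (g * (h : G)))) ∧
      (∀ (g : G) (h : R)
          (x : G ⧸ (H₁ ⊓ Subgroup.map (MulAut.conj (h : G)).toMonoidHom H₂)),
        (Φ ⟨h, g • x⟩).val = g • (Φ ⟨h, x⟩).val) ∧
      Function.Bijective Φ := by
  classical
  -- the underlying map to the product
  have wd : ∀ (h : R) (g g' : G),
      (QuotientGroup.leftRel (H₁ ⊓ Subgroup.map (MulAut.conj (h : G)).toMonoidHom H₂)) g g' → (((QuotientGroup.mk g : G ⧸ H₁),
          (QuotientGroup.mk (g * (h : G)) : G ⧸ H₂)) :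
          (G ⧸ H₁) × (G ⧸ H₂)) =
        ((QuotientGroup.mk g' : G ⧸ H₁), (QuotientGroup.mk (g' * (h : G)) : G ⧸ H₂)) := by
    intro h g g' hgg'
    rw [QuotientGroup.leftRel_apply] at hgg'
    obtain ⟨ha, b, hb, hba⟩ := hgg'
    simp only [MulEquiv.coe_toMonoidHom, MulAut.conj_apply] at hba
    refine Prod.ext ?_ ?_
    · exact (QuotientGroup.eq).2 ha
    · refine (QuotientGroup.eq).2 ?_
      have : (g * (h : G))⁻¹ * (g' * (h : G)) = (h : G)⁻¹ * (g⁻¹ * g') * (h : G) := by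
        group
      rw [this, ← hba]
      have e2 : (↑h)⁻¹ * ((h:G) * b * (↑h)⁻¹) * ↑h = b := by group
      rwa [e2]
  let val : (Σ h : R, G ⧸ (H₁ ⊓ Subgroup.map (MulAut.conj (h : G)).toMonoidHom H₂)) →
      (G ⧸ H₁) × (G ⧸ H₂) :=
    fun p => Quotient.liftOn' p.2
      (fun g => ((QuotientGroup.mk g : G ⧸ H₁), (QuotientGroup.mk (g * (p.1 : G)) : G ⧸ H₂)))
      (wd p.1)
  have hval : ∀ (h : R) (g : G),
      val ⟨h, QuotientGroup.mk g⟩ = (QuotientGroup.mk g, QuotientGroup.mk (g * (h : G))) :=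
    fun _ _ => rfl
  have hmem : ∀ p, ∃ x y : G, (val p).1 = QuotientGroup.mk x ∧
      (val p).2 = QuotientGroup.mk y ∧
      (QuotientGroup.mk x : G ⧸ H) = QuotientGroup.mk y := by
    rintro ⟨h, x⟩
    induction x using Quotient.inductionOn' with
    | h g =>
      refine ⟨g, g * (h : G), rfl, rfl, ?_⟩
      refine (QuotientGroup.eq).2 ?_
      simpa using hR h.2
  refine ⟨fun p => ⟨val p, hmem p⟩, fun h g => hval h g, ?_, ?_, ?_⟩
  · intro g h x
    induction x using Quotient.inductionOn' with
    | h g' =>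
      show val ⟨h, QuotientGroup.mk (g * g')⟩ = g • val ⟨h, QuotientGroup.mk g'⟩
      rw [hval, hval]
      refine Prod.ext ?_ ?_ <;>
        simp [MulAction.Quotient.smul_mk, mul_assoc]
  · -- injective
    rintro ⟨h, x⟩ ⟨h', x'⟩ hxx'
    have hv : val ⟨h, x⟩ = val ⟨h', x'⟩ := congrArg Subtype.val hxx'
    clear hxx'
    induction x using Quotient.inductionOn' with
    | h g =>
    induction x' using Quotient.inductionOn' with
    | h g' =>
      rw [hval, hval, Prod.ext_iff] at hv
      obtain ⟨hv1, hv2⟩ := hv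
      have ha : g⁻¹ * g' ∈ H₁ := (QuotientGroup.eq).1 hv1
      have hb : ((h : G))⁻¹ * (g⁻¹ * g') * (h' : G) ∈ H₂ := by
        have := (QuotientGroup.eq).1 hv2
        have e : (g * (h : G))⁻¹ * (g' * (h' : G)) =
            ((h : G))⁻¹ * (g⁻¹ * g') * (h' : G) := by group
        rwa [e] at this
      -- h = h'
      have hmemH : (h' : G) ∈ H := hR h'.2
      have huniq := hrep (h' : G) hmemH
      obtain ⟨r, _, hru⟩ := huniq
      have e1 : (h' : G) = r := by
        refine (hru (h' : G) ⟨h'.2, 1, one_mem _, 1, one_mem _, by group⟩)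
      have e2 : (h : G) = r := by
        refine hru (h : G) ⟨h.2, ⟨(g⁻¹ * g')⁻¹, inv_mem ha,
          ((h : G))⁻¹ * (g⁻¹ * g') * (h' : G), hb, by group⟩⟩
      have hhh : h = h' := Subtype.ext (e2.trans e1.symm)
      subst hhh
      have hk : g⁻¹ * g' ∈ H₁ ⊓ Subgroup.map (MulAut.conj (h : G)).toMonoidHom H₂ := by
        refine ⟨ha, ((h : G))⁻¹ * (g⁻¹ * g') * (h : G), hb, ?_⟩
        simp only [MulEquiv.coe_toMonoidHom, MulAut.conj_apply]
        group
      exact Sigma.ext rfl (heq_of_eq ((QuotientGroup.eq).2 hk))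
  · -- surjective
    rintro ⟨⟨p1, p2⟩, x, y, hx, hy, hxy⟩
    have hxyH : x⁻¹ * y ∈ H := (QuotientGroup.eq).1 hxy
    obtain ⟨r, ⟨hrR, a, haH, b, hbH, hab⟩, -⟩ := hrep (x⁻¹ * y) hxyH
    simp only at hx hy
    subst hx; subst hy
    refine ⟨⟨⟨r, hrR⟩, QuotientGroup.mk (x * a)⟩, ?_⟩
    refine Subtype.ext ?_
    show val ⟨⟨r, hrR⟩, QuotientGroup.mk (x * a)⟩ = (QuotientGroup.mk x, QuotientGroup.mk y)
    rw [hval]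
    refine Prod.ext ?_ ?_
    · exact (QuotientGroup.eq).2 (by simpa using inv_mem haH)
    · refine (QuotientGroup.eq).2 ?_
      have e : (x * a * r)⁻¹ * y = (a * r)⁻¹ * (x⁻¹ * y) := by group
      rw [e, hab]
      have : (a * r)⁻¹ * (a * r * b) = b := by group
      rw [this]
      exact hbH
end

section
/- Let G be a group, H and K subgroups of G, and Y a set equipped with a left action of H. Fix a set R of representatives for the double cosets H\G/K. Then for every H-equivariant map f : G/K → Y and every g ∈ R, the element f(gK) is fixed by the subgroup H ∩ gKg⁻¹ of H, and the map sending f to the tuple (f(gK))_{g ∈ R} is a bijection from the set Map_H(G/K, Y) of H-equivariant maps G/K → Y onto the product ∏_{g ∈ R} Y^{H ∩ gKg⁻¹} of fixed-point sets. (This is the levelwise content of the double coset formula Map_H(G/K, Y) ≅ ∏_{[g] ∈ H\G/K} Y^{H ∩ gKg⁻¹}.) -/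
/-- **Double coset formula** (levelwise).  Let `H, K ≤ G`, let `Y` be an `H`-set, and let
`R ⊆ G` be a set of representatives for the double cosets `H\G/K`.  Then for every
`H`-equivariant map `f : G/K → Y` and every `g ∈ R`, the value `f(gK)` is fixed by the
subgroup `H ∩ gKg⁻¹`, and `f ↦ (f(gK))_{g ∈ R}` is a bijection from the set of
`H`-equivariant maps `G/K → Y` onto `∏_{g ∈ R} Y^{H ∩ gKg⁻¹}`. -/
theorem stmt_2 {G : Type*} [Group G] (H K : Subgroup G)
    (Y : Type*) [MulAction H Y]
    (R : Set G)
    (hrep : ∀ x : G, ∃! r, r ∈ R ∧ ∃ a ∈ H, ∃ b ∈ K, x = a * r * b) :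
    (∀ f : {f : G ⧸ K → Y // ∀ (h : H) (x : G ⧸ K), f ((h : G) • x) = h • f x},
      ∀ g : R, ∀ h : H,
        (h : G) ∈ Subgroup.map (MulAut.conj (g : G)).toMonoidHom K →
          h • f.val (QuotientGroup.mk (g : G)) = f.val (QuotientGroup.mk (g : G))) ∧
    Function.Injective
      (fun f : {f : G ⧸ K → Y // ∀ (h : H) (x : G ⧸ K), f ((h : G) • x) = h • f x} =>
        fun g : R => f.val (QuotientGroup.mk (g : G))) ∧
    Set.range
        (fun f : {f : G ⧸ K → Y // ∀ (h : H) (x : G ⧸ K), f ((h : G) • x) = h • f x} =>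
          fun g : R => f.val (QuotientGroup.mk (g : G))) =
      {y : R → Y | ∀ (g : R) (h : H),
        (h : G) ∈ Subgroup.map (MulAut.conj (g : G)).toMonoidHom K → h • y g = y g} := by
  classical
  -- the first claim
  have key : ∀ f : {f : G ⧸ K → Y // ∀ (h : H) (x : G ⧸ K), f ((h : G) • x) = h • f x},
      ∀ g : R, ∀ h : H,
        (h : G) ∈ Subgroup.map (MulAut.conj (g : G)).toMonoidHom K →
          h • f.val (QuotientGroup.mk (g : G)) = f.val (QuotientGroup.mk (g : G)) := by
    rintro f ⟨g, hg⟩ h ⟨k, hk, hhk⟩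
    have hq : ((h : G) • (QuotientGroup.mk g : G ⧸ K)) = QuotientGroup.mk g := by
      show (QuotientGroup.mk ((h : G) * g) : G ⧸ K) = QuotientGroup.mk g
      have : (h : G) * g = g * k := by
        simp only [MulAut.conj_apply, MulEquiv.toMonoidHom_eq_coe, MonoidHom.coe_coe] at hhk
        rw [← hhk]; group
      rw [this]
      exact QuotientGroup.mk_mul_of_mem g hk
    rw [← f.2 h, hq]
  refine ⟨key, ?_, ?_⟩
  · -- injectivity
    intro f₁ f₂ hf
    ext x
    induction x using QuotientGroup.induction_on with
    | H x =>
      obtain ⟨r, ⟨hr, a, ha, b, hb, hx⟩, -⟩ := hrep x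
      have hq : (QuotientGroup.mk x : G ⧸ K) = a • QuotientGroup.mk r := by
        show _ = QuotientGroup.mk (a * r)
        rw [hx]
        exact QuotientGroup.mk_mul_of_mem (a * r) hb
      have h1 := f₁.2 ⟨a, ha⟩ (QuotientGroup.mk r)
      have h2 := f₂.2 ⟨a, ha⟩ (QuotientGroup.mk r)
      have hr' : f₁.val (QuotientGroup.mk r) = f₂.val (QuotientGroup.mk r) :=
        congrFun hf ⟨r, hr⟩
      simp only [hq]
      calc f₁.val ((a : G) • QuotientGroup.mk r) = (⟨a, ha⟩ : H) • f₁.val (QuotientGroup.mk r) := h1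
        _ = (⟨a, ha⟩ : H) • f₂.val (QuotientGroup.mk r) := by rw [hr']
        _ = f₂.val ((a : G) • QuotientGroup.mk r) := h2.symm
  · -- range
    ext y
    constructor
    · rintro ⟨f, rfl⟩
      exact key f
    · intro hy
      choose rep hmem a ha b hb hx using fun x => (hrep x).exists
      -- central computation lemma
      have main : ∀ (x r a₁ b₁ : G) (hr : r ∈ R) (ha₁ : a₁ ∈ H) (hb₁ : b₁ ∈ K),
          x = a₁ * r * b₁ →
          (⟨a x, ha x⟩ : H) • y ⟨rep x, hmem x⟩ = (⟨a₁, ha₁⟩ : H) • y ⟨r, hr⟩ := by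
        intro x r a₁ b₁ hr ha₁ hb₁ hx₁
        have hrx : rep x = r :=
          ((hrep x).unique ⟨hmem x, a x, ha x, b x, hb x, hx x⟩ ⟨hr, a₁, ha₁, b₁, hb₁, hx₁⟩)
        subst hrx
        have heq : a x * rep x * b x = a₁ * rep x * b₁ := (hx x).symm.trans hx₁
        have hH : a₁⁻¹ * a x ∈ H := mul_mem (inv_mem ha₁) (ha x)
        have hconj : a₁⁻¹ * a x ∈ Subgroup.map (MulAut.conj (rep x)).toMonoidHom K := by
          refine ⟨b₁ * (b x)⁻¹, mul_mem hb₁ (inv_mem (hb x)), ?_⟩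
          simp only [MulAut.conj_apply, MulEquiv.toMonoidHom_eq_coe, MonoidHom.coe_coe,
            MulAut.conj_apply]
          have : a₁⁻¹ * (a x * rep x * b x) * (b x)⁻¹ = a₁⁻¹ * a x * rep x := by group
          calc rep x * (b₁ * (b x)⁻¹) * (rep x)⁻¹
              = a₁⁻¹ * (a₁ * rep x * b₁) * (b x)⁻¹ * (rep x)⁻¹ := by group
            _ = a₁⁻¹ * (a x * rep x * b x) * (b x)⁻¹ * (rep x)⁻¹ := by rw [← heq]
            _ = a₁⁻¹ * a x := by group
        have hfix := hy ⟨rep x, hmem x⟩ ⟨a₁⁻¹ * a x, hH⟩ hconj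
        calc (⟨a x, ha x⟩ : H) • y ⟨rep x, hmem x⟩
            = ((⟨a₁, ha₁⟩ : H) * ⟨a₁⁻¹ * a x, hH⟩) • y ⟨rep x, hmem x⟩ := by
              congr 1; ext; simp [mul_assoc]
          _ = (⟨a₁, ha₁⟩ : H) • (⟨a₁⁻¹ * a x, hH⟩ : H) • y ⟨rep x, hmem x⟩ := mul_smul _ _ _
          _ = (⟨a₁, ha₁⟩ : H) • y ⟨rep x, hmem x⟩ := by rw [hfix]
      -- define the function
      set F : G → Y := fun x => (⟨a x, ha x⟩ : H) • y ⟨rep x, hmem x⟩ with hF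
      have wd : ∀ x x' : G, (QuotientGroup.leftRel K) x x' → F x = F x' := by
        intro x x' hxx
        have hk : x⁻¹ * x' ∈ K := (QuotientGroup.leftRel_apply).mp hxx
        have hx' : x' = a x * rep x * (b x * (x⁻¹ * x')) := by
          rw [← mul_assoc, ← hx x]; group
        exact (main x' (rep x) (a x) (b x * (x⁻¹ * x')) (hmem x) (ha x)
          (mul_mem (hb x) hk) hx').symm
      let f : G ⧸ K → Y := Quotient.lift F (fun x x' h => wd x x' h)
      have hfmk : ∀ x : G, f (QuotientGroup.mk x) = F x := fun _ => rfl
      have hequiv : ∀ (h : H) (q : G ⧸ K), f ((h : G) • q) = h • f q := by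
        intro h q
        induction q using QuotientGroup.induction_on with
        | H x =>
          show f (QuotientGroup.mk ((h : G) * x)) = h • f (QuotientGroup.mk x)
          rw [hfmk, hfmk]
          have hx'' : (h : G) * x = ((h : G) * a x) * rep x * b x := by
            rw [mul_assoc, mul_assoc, ← mul_assoc (a x), ← hx x]
          have := main ((h : G) * x) (rep x) ((h : G) * a x) (b x) (hmem x)
            (mul_mem h.2 (ha x)) (hb x) hx''
          rw [hF]
          simp only at this ⊢
          rw [this]
          rw [show (⟨(h : G) * a x, mul_mem h.2 (ha x)⟩ : H) = h * ⟨a x, ha x⟩ from rfl,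
            mul_smul]
      refine ⟨⟨f, hequiv⟩, ?_⟩
      funext g
      show f (QuotientGroup.mk (g : G)) = y g
      rw [hfmk]
      have hg1 : (g : G) = (1 : G) * (g : G) * 1 := by group
      have := main (g : G) (g : G) 1 1 g.2 (one_mem H) (one_mem K) hg1
      rw [hF]
      simp only at this ⊢
      rw [this, show (⟨(1:G), one_mem H⟩ : H) = 1 from rfl, one_smul]
end

section
/- Let d be a negative square-free integer, F = ℚ(δ) with δ² = d, B a finite-dimensional F-algebra with an involution * of the second kind, and V a left B-module that is finite-dimensional over ℚ. Then the assignments Φ and Ψ, defined by Φ(⟨−,−⟩)(v,w) = ⟨δv, w⟩ + δ⟨v, w⟩ and Ψ((−,−))(v,w) = (1/(2d))·Tr_{F/ℚ}(δ·(v,w)), are mutually inverse bijections between: (a) the set of nondegenerate *-hermitian alternating ℚ-bilinear forms ⟨−,−⟩ : V × V → ℚ, and (b) the set of nondegenerate *-hermitian *-symmetric forms (−,−) : V × V → F, i.e. forms that are F-linear in the first variable, satisfy (v,w) = c((w,v)) for all v, w, satisfy (bv, w) = (v, b*w) for all b ∈ B, and are nondegenerate. -/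
section Forms

variable {F : Type*} [Field F] [Algebra ℚ F] (c : F ≃ₐ[ℚ] F)
variable {B : Type*} [Ring B] [Algebra F B]
variable {V : Type*} [AddCommGroup V] [Module ℚ V] [Module F V] [Module B V]
variable (σ : B → B)

/-- A nondegenerate `*`-hermitian alternating `ℚ`-bilinear form on the `B`-module `V`. -/
def IsAltHermForm (L : V → V → ℚ) : Prop :=
  (∀ v v' w : V, L (v + v') w = L v w + L v' w) ∧
  (∀ v w w' : V, L v (w + w') = L v w + L v w') ∧
  (∀ (q : ℚ) (v w : V), L (q • v) w = q * L v w) ∧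
  (∀ (q : ℚ) (v w : V), L v (q • w) = q * L v w) ∧
  (∀ v : V, L v v = 0) ∧
  (∀ (b : B) (v w : V), L (b • v) w = L v (σ b • w)) ∧
  (∀ v : V, (∀ w : V, L v w = 0) → v = 0)

/-- A nondegenerate `*`-hermitian `*`-symmetric `F`-valued form on the `B`-module `V`:
`F`-linear in the first variable, conjugate-symmetric, and hermitian for `σ`. -/
def IsHermSymForm (s : V → V → F) : Prop :=
  (∀ v v' w : V, s (v + v') w = s v w + s v' w) ∧
  (∀ v w w' : V, s v (w + w') = s v w + s v w') ∧
  (∀ (a : F) (v w : V), s (a • v) w = a * s v w) ∧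
  (∀ v w : V, s v w = c (s w v)) ∧
  (∀ (b : B) (v w : V), s (b • v) w = s v (σ b • w)) ∧
  (∀ v : V, (∀ w : V, s v w = 0) → v = 0)

end Forms


lemma trace_delta_aux {F : Type*} [Field F] [Algebra ℚ F]
    (δ : F) (c : F ≃ₐ[ℚ] F) (hc : c δ = -δ) :
    Algebra.trace ℚ F δ = 0 := by
  have h := Algebra.trace_eq_of_algEquiv c δ
  rw [hc, map_neg] at h
  linarith

lemma span_aux {F : Type*} [Field F] [Algebra ℚ F] (hF : Module.finrank ℚ F = 2)
    (δ : F) (c : F ≃ₐ[ℚ] F) (hc : c δ = -δ) (hδ0 : δ ≠ 0) :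
    ∀ z : F, ∃ q q' : ℚ, z = algebraMap ℚ F q + q' • δ := by
  haveI : CharZero F := charZero_of_injective_algebraMap (algebraMap ℚ F).injective
  have hli : LinearIndependent ℚ ![δ, (1 : F)] := by
    rw [LinearIndependent.pair_iff]
    intro s t hst
    by_cases hs : s = 0
    · subst hs
      simp only [zero_smul, zero_add] at hst
      refine ⟨rfl, ?_⟩
      have : (t : F) = 0 := by simpa [Algebra.smul_def, eq_ratCast (algebraMap ℚ F)] using hst
      exact_mod_cast this
    · exfalso
      have hs' : (s : F) ≠ 0 := by exact_mod_cast hs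
      have hst' : (s : F) * δ + (t : F) = 0 := by
        simpa [Algebra.smul_def, eq_ratCast (algebraMap ℚ F)] using hst
      have h1 : δ = ((-t / s : ℚ) : F) := by
        push_cast
        field_simp
        linear_combination hst'
      have h2 : c δ = δ := by rw [h1, map_ratCast]
      rw [hc] at h2
      have h3 : (2 : F) * δ = 0 := by linear_combination -h2
      rcases mul_eq_zero.mp h3 with h | h
      · exact two_ne_zero h
      · exact hδ0 h
  intro z
  have hcard : Fintype.card (Fin 2) = Module.finrank ℚ F := by simp [hF]
  let b := basisOfLinearIndependentOfCardEqFinrank hli hcard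
  have hb : ∀ i, b i = ![δ, (1:F)] i := fun i => by
    simp [b, coe_basisOfLinearIndependentOfCardEqFinrank]
  refine ⟨b.repr z 1, b.repr z 0, ?_⟩
  have := b.sum_repr z
  rw [Fin.sum_univ_two, hb 0, hb 1] at this
  simp only [Matrix.cons_val_zero, Matrix.cons_val_one, Matrix.head_cons] at this
  rw [Algebra.algebraMap_eq_smul_one]
  conv_lhs => rw [← this]
  rw [add_comm]

lemma htr_aux {F : Type*} [Field F] [Algebra ℚ F] (hF : Module.finrank ℚ F = 2)
    (δ : F) (c : F ≃ₐ[ℚ] F) (hc : c δ = -δ) (hδ0 : δ ≠ 0) :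
    ∀ z : F, algebraMap ℚ F (Algebra.trace ℚ F z) = z + c z := by
  intro z
  obtain ⟨q, q', rfl⟩ := span_aux hF δ c hc hδ0 z
  have h1 : Algebra.trace ℚ F (algebraMap ℚ F q + q' • δ) = 2 * q := by
    rw [map_add, map_smul, Algebra.trace_algebraMap, trace_delta_aux δ c hc, hF]
    simp
  rw [h1, map_add, map_smul, AlgEquiv.commutes, hc]
  rw [map_mul]
  simp [smul_neg]
  simp only [Algebra.smul_def]
  ring

/-- The mutually inverse correspondences `Φ(⟨−,−⟩)(v,w) = ⟨δv,w⟩ + δ⟨v,w⟩` and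
`Ψ((−,−))(v,w) = (1/(2d))·Tr_{F/ℚ}(δ·(v,w))` between nondegenerate `*`-hermitian
alternating `ℚ`-bilinear forms and nondegenerate `*`-hermitian `*`-symmetric `F`-valued
forms on a `B`-module `V`, where `F = ℚ(δ)`, `δ² = d < 0` squarefree, and `B` carries an
involution `σ` of the second kind. -/
theorem stmt_4 (d : ℤ) (hd : d < 0) (hdsq : Squarefree d)
    (F : Type*) [Field F] [Algebra ℚ F] (hF : Module.finrank ℚ F = 2)
    (δ : F) (hδ : δ ^ 2 = (d : F))
    (c : F ≃ₐ[ℚ] F) (hc : c δ = -δ)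
    (B : Type*) [Ring B] [Algebra F B] [FiniteDimensional F B]
    (σ : B → B)
    (hσadd : ∀ x y : B, σ (x + y) = σ x + σ y)
    (hσmul : ∀ x y : B, σ (x * y) = σ y * σ x)
    (hσinv : ∀ x : B, σ (σ x) = x)
    (hσF : ∀ a : F, σ (algebraMap F B a) = algebraMap F B (c a))
    (V : Type*) [AddCommGroup V] [Module ℚ V] [Module F V] [Module B V]
    [IsScalarTower ℚ F V] [IsScalarTower F B V] [FiniteDimensional ℚ V] :
    (∀ L : V → V → ℚ, IsAltHermForm σ L →
      IsHermSymForm c σ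
        (fun v w => algebraMap ℚ F (L (δ • v) w) + δ * algebraMap ℚ F (L v w))) ∧
    (∀ s : V → V → F, IsHermSymForm c σ s →
      IsAltHermForm σ
        (fun v w => (1 / (2 * (d : ℚ))) * Algebra.trace ℚ F (δ * s v w))) ∧
    (∀ L : V → V → ℚ, IsAltHermForm σ L → ∀ v w : V,
      (1 / (2 * (d : ℚ))) * Algebra.trace ℚ F
          (δ * (algebraMap ℚ F (L (δ • v) w) + δ * algebraMap ℚ F (L v w))) = L v w) ∧
    (∀ s : V → V → F, IsHermSymForm c σ s → ∀ v w : V,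
      algebraMap ℚ F ((1 / (2 * (d : ℚ))) * Algebra.trace ℚ F (δ * s (δ • v) w)) +
          δ * algebraMap ℚ F ((1 / (2 * (d : ℚ))) * Algebra.trace ℚ F (δ * s v w)) =
        s v w) := by
  haveI : CharZero F := charZero_of_injective_algebraMap (algebraMap ℚ F).injective
  have hδ0 : δ ≠ 0 := by
    intro h
    have h1 : (d : F) = 0 := by rw [← hδ, h]; ring
    have h2 : (d : ℤ) = 0 := by exact_mod_cast h1
    omega
  have hd0 : (d : ℚ) ≠ 0 := Int.cast_ne_zero.mpr (by omega)
  have hinj : Function.Injective (algebraMap ℚ F) := (algebraMap ℚ F).injective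
  have htr := htr_aux hF δ c hc hδ0
  have hcq : ∀ q : ℚ, c (algebraMap ℚ F q) = algebraMap ℚ F q := fun q => c.commutes q
  have hdF : δ * δ = algebraMap ℚ F (d : ℚ) := by
    rw [eq_ratCast (algebraMap ℚ F)]
    push_cast
    rw [← hδ]; ring
  have htrδ : ∀ z : F, algebraMap ℚ F (Algebra.trace ℚ F (δ * z)) = δ * (z - c z) := by
    intro z
    rw [htr (δ * z), map_mul, hc]; ring
  -- hkey: extracting the δ-coefficient
  have hkey : ∀ a b : ℚ, (1 / (2 * (d : ℚ))) *
      Algebra.trace ℚ F (δ * (algebraMap ℚ F a + δ * algebraMap ℚ F b)) = b := by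
    intro a b
    have h := htrδ (algebraMap ℚ F a + δ * algebraMap ℚ F b)
    rw [map_add c, map_mul c, hcq a, hcq b, hc] at h
    have h2 : algebraMap ℚ F (Algebra.trace ℚ F
        (δ * (algebraMap ℚ F a + δ * algebraMap ℚ F b))) = algebraMap ℚ F (2 * (d : ℚ) * b) := by
      rw [h, map_mul, map_mul]
      rw [show algebraMap ℚ F (2 : ℚ) = (2 : F) from map_ofNat _ 2]
      linear_combination (2 * algebraMap ℚ F b) * hdF
    have h3 := hinj h2
    rw [h3]
    field_simp
  -- hrec: reconstruction
  have hrec : ∀ z : F,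
      algebraMap ℚ F ((1 / (2 * (d : ℚ))) * Algebra.trace ℚ F (δ * (δ * z))) +
        δ * algebraMap ℚ F ((1 / (2 * (d : ℚ))) * Algebra.trace ℚ F (δ * z)) = z := by
    intro z
    rw [map_mul (algebraMap ℚ F), map_mul (algebraMap ℚ F), htrδ (δ * z), htrδ z, map_mul c, hc]
    have h1 : algebraMap ℚ F (1 / (2 * (d : ℚ))) * (2 * algebraMap ℚ F (d : ℚ)) = 1 := by
      rw [show (2 : F) = algebraMap ℚ F 2 from (map_ofNat _ 2).symm, ← map_mul, ← map_mul]
      rw [show (1 / (2 * (d:ℚ))) * (2 * (d:ℚ)) = 1 by field_simp, map_one]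
    linear_combination (algebraMap ℚ F (1 / (2 * (d:ℚ))) * 2 * z) * hdF + z * h1
  -- shared module facts
  have hQV : ∀ (q : ℚ) (x : V), (algebraMap ℚ F q) • x = q • x := fun q x => algebraMap_smul F q x
  have hFB : ∀ (a : F) (x : V), (algebraMap F B a) • x = a • x := fun a x => algebraMap_smul B a x
  have hcommQF : ∀ (q : ℚ) (a : F) (x : V), a • q • x = q • a • x := by
    intro q a x
    rw [← hQV, ← mul_smul, mul_comm, mul_smul, hQV]
  have hδδ : ∀ x : V, δ • δ • x = (d : ℚ) • x := by
    intro x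
    rw [← mul_smul, hdF, hQV]
  have h2d0 : (2 * (d : ℚ)) ≠ 0 := by simp [hd0]
  refine ⟨?_, ?_, ?_, ?_⟩
  · -- Part 1
    intro L hL
    obtain ⟨Ladd1, Ladd2, Lsm1, Lsm2, Lalt, Lherm, Lnd⟩ := hL
    have Lskew : ∀ v w : V, L w v = -L v w := by
      intro v w
      have h := Lalt (v + w)
      rw [Ladd1, Ladd2, Ladd2, Lalt v, Lalt w] at h
      linarith
    have Lneg2 : ∀ (v w : V), L v (-w) = -L v w := by
      intro v w
      have h := Lsm2 (-1) v w
      simpa using h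
    have Lδmove : ∀ v w : V, L (δ • v) w = - L v (δ • w) := by
      intro v w
      have h := Lherm (algebraMap F B δ) v w
      rw [hFB, hσF, hc, map_neg, neg_smul, Lneg2, hFB] at h
      exact h
    have Lsymδ : ∀ v w : V, L (δ • v) w = L (δ • w) v := by
      intro v w
      rw [Lδmove v w, Lskew v (δ • w)]
    have hcommB : ∀ (b : B) (x : V), b • (δ • x) = δ • (b • x) := by
      intro b x
      rw [← hFB δ x, ← mul_smul, ← hFB δ (b • x), ← mul_smul, Algebra.commutes δ b]
    have hfirst : ∀ (b : B) (v w : V), L (δ • (b • v)) w = L (δ • v) (σ b • w) := by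
      intro b v w
      rw [Lδmove (b • v) w, Lδmove v (σ b • w), Lherm b v (δ • w), hcommB (σ b) w]
    refine ⟨?_, ?_, ?_, ?_, ?_, ?_⟩
    · intro v v' w
      simp only
      rw [smul_add, Ladd1, Ladd1, map_add, map_add]
      ring
    · intro v w w'
      simp only
      rw [Ladd2, Ladd2, map_add, map_add]
      ring
    · intro a v w
      simp only
      obtain ⟨q, q', rfl⟩ := span_aux hF δ c hc hδ0 a
      have hsmul : (algebraMap ℚ F q + q' • δ) • v = q • v + q' • (δ • v) := by
        rw [add_smul, hQV, smul_assoc]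
      rw [hsmul, smul_add δ, Ladd1, Ladd1, hcommQF q δ v, hcommQF q' δ (δ • v), hδδ v]
      rw [Lsm1, Lsm1, Lsm1, Lsm1, Lsm1]
      simp only [map_add, map_mul]
      rw [Algebra.smul_def q' δ]
      linear_combination (-(algebraMap ℚ F q' * algebraMap ℚ F (L v w))) * hdF
    · intro v w
      simp only
      rw [map_add, map_mul, hcq, hcq, hc, Lsymδ w v, Lskew v w, map_neg]
      ring
    · intro b v w
      simp only
      rw [Lherm b v w, hfirst b v w]
    · intro v hv
      apply Lnd
      intro w
      have hw := hv w
      simp only at hw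
      have h := hkey (L (δ • v) w) (L v w)
      rw [hw, mul_zero, map_zero, mul_zero] at h
      exact h.symm
  · -- Part 2
    intro s hs
    obtain ⟨sadd1, sadd2, slin, ssym, sherm, snd⟩ := hs
    refine ⟨?_, ?_, ?_, ?_, ?_, ?_, ?_⟩
    · intro v v' w
      simp only
      rw [sadd1, mul_add, map_add]
      ring
    · intro v w w'
      simp only
      rw [sadd2, mul_add, map_add]
      ring
    · intro q v w
      simp only
      rw [← hQV q v, slin]
      rw [show δ * (algebraMap ℚ F q * s v w) = q • (δ * s v w) by rw [Algebra.smul_def]; ring]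
      rw [map_smul, smul_eq_mul]
      ring
    · intro q v w
      simp only
      have h2 : s v (q • w) = algebraMap ℚ F q * s v w := by
        rw [ssym v (q • w), ← hQV q w, slin, map_mul, hcq, ← ssym v w]
      rw [h2, show δ * (algebraMap ℚ F q * s v w) = q • (δ * s v w) by rw [Algebra.smul_def]; ring]
      rw [map_smul, smul_eq_mul]
      ring
    · intro v
      simp only
      have h0 : Algebra.trace ℚ F (δ * s v v) = 0 := by
        apply hinj
        rw [htrδ, map_zero, ← ssym v v]
        ring
      rw [h0, mul_zero]
    · intro b v w
      simp only
      rw [sherm b v w]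
    · intro v hv
      apply snd
      intro w
      have h1 : Algebra.trace ℚ F (δ * s v w) = 0 := by
        have hw := hv w
        simp only at hw
        rcases mul_eq_zero.mp hw with h | h
        · exact absurd h (one_div_ne_zero h2d0)
        · exact h
      have h2 : Algebra.trace ℚ F (s v w) = 0 := by
        have hw := hv (δ • w)
        simp only at hw
        have hsw : s v (δ • w) = -δ * s v w := by
          rw [ssym v (δ • w), slin, map_mul, hc, ← ssym v w]
        rw [hsw] at hw
        rw [show δ * (-δ * s v w) = (-(d:ℚ)) • (s v w) by
          rw [neg_smul, Algebra.smul_def]; linear_combination (-(s v w)) * hdF] at hw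
        rw [map_smul, smul_eq_mul] at hw
        rcases mul_eq_zero.mp hw with h | h
        · exact absurd h (one_div_ne_zero h2d0)
        · rcases mul_eq_zero.mp h with h' | h'
          · exact absurd h' (by simpa using hd0)
          · exact h'
      have h3 : s v w + c (s v w) = 0 := by
        have h := htr (s v w)
        rw [h2, map_zero] at h
        exact h.symm
      have h4 : δ * (s v w - c (s v w)) = 0 := by
        have h := htrδ (s v w)
        rw [h1, map_zero] at h
        exact h.symm
      have h5 : s v w - c (s v w) = 0 := by
        rcases mul_eq_zero.mp h4 with h | h
        · exact absurd h hδ0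
        · exact h
      have h6 : (2 : F) * s v w = 0 := by linear_combination h3 + h5
      rcases mul_eq_zero.mp h6 with h | h
      · exact absurd h two_ne_zero
      · exact h
  · -- Part 3
    intro L hL v w
    exact hkey (L (δ • v) w) (L v w)
  · -- Part 4
    intro s hs v w
    obtain ⟨-, -, slin, -, -, -⟩ := hs
    have h1 : s (δ • v) w = δ * s v w := slin δ v w
    rw [h1]
    exact hrec (s v w)
end

section
/- Let d be a negative square-free integer, F = ℚ(δ) with δ² = d, and B a central simple F-algebra of dimension n² over F, equipped with an involution * of the second kind. Regard B as a left module over itself, and let Tr_{B/ℚ} : B → ℚ denote the trace of the regular representation of the finite-dimensional ℚ-algebra B (so Tr_{B/ℚ} = Tr_{F/ℚ} ∘ Tr_{B/F}, and Tr_{B/ℚ}(zw) = Tr_{B/ℚ}(wz)). Then for every nondegenerate *-hermitian alternating ℚ-bilinear form ⟨−,−⟩ on B there exists a unique element β ∈ B satisfying β* = −β and ⟨x, y⟩ = Tr_{B/ℚ}(x β y*) for all x, y ∈ B. Moreover β is invertible in B, and the adjoint involution of the form on right multiplications is conjugation of * by β: for all b, x, y ∈ B one has ⟨x b, y⟩ =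 ⟨x, y·(β b* β⁻¹)⟩. -/
/-- Let `F = ℚ(δ)` be imaginary quadratic (`δ² = d < 0` squarefree) and `B` a central
simple `F`-algebra of dimension `n²` with an involution `σ` of the second kind.  Then
every nondegenerate `σ`-hermitian alternating `ℚ`-bilinear form `L` on `B` (as a left
module over itself) is of the form `L(x,y) = Tr_{B/ℚ}(x β σ(y))` (trace of the regular representation) for a unique `β ∈ B` with
`σ(β) = -β`; moreover `β` is invertible and the adjoint of right multiplication is
conjugation of `σ` by `β`:  `L(xb, y) = L(x, y·(β σ(b) β⁻¹))`. -/
theorem stmt_5 (d : ℤ) (hd : d < 0) (hdsq : Squarefree d)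
    (F : Type*) [Field F] [Algebra ℚ F] (hF : Module.finrank ℚ F = 2)
    (δ : F) (hδ : δ ^ 2 = (d : F))
    (c : F ≃ₐ[ℚ] F) (hc : c δ = -δ)
    (n : ℕ) (hn : 0 < n)
    (B : Type*) [Ring B] [Algebra F B] [Algebra ℚ B] [IsScalarTower ℚ F B]
    [Algebra.IsCentral F B] [IsSimpleRing B]
    [FiniteDimensional F B] [FiniteDimensional ℚ B]
    (hdim : Module.finrank F B = n ^ 2)
    (σ : B → B)
    (hσadd : ∀ x y : B, σ (x + y) = σ x + σ y)
    (hσmul : ∀ x y : B, σ (x * y) = σ y * σ x)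
    (hσinv : ∀ x : B, σ (σ x) = x)
    (hσF : ∀ a : F, σ (algebraMap F B a) = algebraMap F B (c a))
    (L : B → B → ℚ)
    (hLadd₁ : ∀ x x' y : B, L (x + x') y = L x y + L x' y)
    (hLadd₂ : ∀ x y y' : B, L x (y + y') = L x y + L x y')
    (hLsmul₁ : ∀ (q : ℚ) (x y : B), L (q • x) y = q * L x y)
    (hLsmul₂ : ∀ (q : ℚ) (x y : B), L x (q • y) = q * L x y)
    (hLalt : ∀ x : B, L x x = 0)
    (hLherm : ∀ b x y : B, L (b * x) y = L x (σ b * y))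
    (hLnd : ∀ x : B, (∀ y : B, L x y = 0) → x = 0) :
    ∃ β : B,
      σ β = -β ∧
      (∀ x y : B, L x y = LinearMap.trace ℚ B (LinearMap.mulLeft ℚ (x * β * σ y))) ∧
      (∀ β' : B, σ β' = -β' →
        (∀ x y : B, L x y = LinearMap.trace ℚ B (LinearMap.mulLeft ℚ (x * β' * σ y))) → β' = β) ∧
      IsUnit β ∧
      (∀ b x y : B, L (x * b) y = L x (y * (β * σ b * Ring.inverse β))) := by
  classical
  -- the trace functional of the regular representation
  set T : B →ₗ[ℚ] ℚ := (LinearMap.trace ℚ B).comp (LinearMap.mul ℚ B) with hTdef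
  have hmulL : ∀ z : B, LinearMap.mul ℚ B z = LinearMap.mulLeft ℚ z := fun z =>
    LinearMap.ext fun w => by simp [LinearMap.mul_apply', LinearMap.mulLeft_apply]
  have hT : ∀ z : B, T z = LinearMap.trace ℚ B (LinearMap.mulLeft ℚ z) := fun z => by
    simp [hTdef, hmulL z]
  -- cyclicity
  have hTc : ∀ x y : B, T (x * y) = T (y * x) := by
    intro x y
    rw [hT, hT, LinearMap.mulLeft_mul, LinearMap.mulLeft_mul, ← Module.End.mul_eq_comp,
      ← Module.End.mul_eq_comp]
    exact LinearMap.trace_mul_comm ℚ _ _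
  have hT1 : T 1 = (Module.finrank ℚ B : ℚ) := by
    rw [hT, LinearMap.mulLeft_one, LinearMap.trace_id]
  have hfr : (Module.finrank ℚ B : ℚ) ≠ 0 := by
    have : 0 < Module.finrank ℚ B := Module.finrank_pos
    exact_mod_cast this.ne'
  -- nondegeneracy of the trace pairing, via simplicity
  have hTnd : ∀ z : B, (∀ w : B, T (z * w) = 0) → z = 0 := by
    intro z hz
    set S : Set B := {u | ∀ w, T (u * w) = 0} with hSdef
    have h0 : (0 : B) ∈ S := fun w => by simp
    have hadd : ∀ {x y : B}, x ∈ S → y ∈ S → x + y ∈ S := fun {x y} hx hy w => by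
      rw [add_mul, map_add, hx w, hy w, add_zero]
    have hneg : ∀ {x : B}, x ∈ S → -x ∈ S := fun {x} hx w => by
      rw [neg_mul, map_neg, hx w, neg_zero]
    have hml : ∀ {x y : B}, y ∈ S → x * y ∈ S := fun {x y} hy w => by
      have h1 : T (x * y * w) = T (y * (w * x)) := by
        rw [mul_assoc, hTc, mul_assoc]
      rw [h1]; exact hy _
    have hmr : ∀ {x y : B}, x ∈ S → x * y ∈ S := fun {x y} hx w => by
      rw [mul_assoc]; exact hx _
    set I : TwoSidedIdeal B := TwoSidedIdeal.mk' S h0 hadd hneg hml hmr with hIdef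
    rcases (IsSimpleRing.simple (R := B)).eq_bot_or_eq_top I with hI | hI
    · have hzI : z ∈ I := by
        rw [hIdef, TwoSidedIdeal.mem_mk']
        exact hz
      rw [hI] at hzI
      exact (TwoSidedIdeal.mem_bot B).mp hzI
    · exfalso
      have h1 : (1 : B) ∈ I := by rw [hI]; exact TwoSidedIdeal.mem_top B
      have h1' : (1 : B) ∈ S := by
        rw [hIdef, TwoSidedIdeal.mem_mk'] at h1
        exact h1
      have := h1' 1
      rw [one_mul, hT1] at this
      exact hfr this
  -- the map z ↦ T(z * ·) is a linear isomorphism onto the dual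
  set Φ : B →ₗ[ℚ] Module.Dual ℚ B :=
    (LinearMap.llcomp ℚ B B ℚ T).comp (LinearMap.mul ℚ B) with hΦdef
  have hΦ : ∀ z w : B, Φ z w = T (z * w) := fun z w => by
    simp [hΦdef, LinearMap.mul_apply']
  have hΦinj : Function.Injective Φ := by
    rw [← LinearMap.ker_eq_bot, LinearMap.ker_eq_bot']
    intro z hz
    refine hTnd z fun w => ?_
    have := DFunLike.congr_fun hz w
    simpa [hΦ] using this
  have hΦsurj : Function.Surjective Φ :=
    (LinearMap.injective_iff_surjective_of_finrank_eq_finrank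
      (Subspace.dual_finrank_eq).symm).mp hΦinj
  -- σ is ℚ-linear
  have hσ0 : σ 0 = 0 := by
    have h := hσadd 0 0
    rw [add_zero] at h
    exact (left_eq_add.mp h)
  have hσ1 : σ 1 = 1 := by
    have := hσF 1
    simpa using this
  have hσsmul : ∀ (q : ℚ) (x : B), σ (q • x) = q • σ x := by
    intro q x
    have h2 : σ (algebraMap ℚ B q) = algebraMap ℚ B q := by
      rw [IsScalarTower.algebraMap_apply ℚ F B, hσF, AlgEquiv.commutes]
    rw [Algebra.smul_def, hσmul, h2, Algebra.smul_def]
    exact (Algebra.commutes q (σ x)).symm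
  set σl : B →ₗ[ℚ] B :=
    { toFun := σ, map_add' := hσadd, map_smul' := fun q x => by simpa using hσsmul q x }
    with hσldef
  have hσlapp : ∀ x : B, σl x = σ x := fun x => rfl
  -- T ∘ mulRight
  set T' : B →ₗ[ℚ] ℚ := (LinearMap.trace ℚ B).comp (LinearMap.mul ℚ B).flip with hT'def
  have hmulR : ∀ z : B, (LinearMap.mul ℚ B).flip z = LinearMap.mulRight ℚ z := fun z =>
    LinearMap.ext fun w => by simp [LinearMap.mul_apply', LinearMap.mulRight_apply]
  have hT' : ∀ z : B, T' z = LinearMap.trace ℚ B (LinearMap.mulRight ℚ z) := fun z => by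
    simp [hT'def, hmulR z]
  have hT'c : ∀ x y : B, T' (x * y) = T' (y * x) := by
    intro x y
    rw [hT', hT', LinearMap.mulRight_mul, LinearMap.mulRight_mul, ← Module.End.mul_eq_comp,
      ← Module.End.mul_eq_comp]
    exact LinearMap.trace_mul_comm ℚ _ _
  -- T(σ z) = T'(z)
  have hTσT' : ∀ z : B, T (σ z) = T' z := by
    intro z
    have h1 : LinearMap.mulLeft ℚ (σ z) = (σl.comp (LinearMap.mulRight ℚ z)).comp σl := by
      refine LinearMap.ext fun w => ?_
      simp only [LinearMap.mulLeft_apply, LinearMap.comp_apply, LinearMap.mulRight_apply, hσlapp]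
      rw [hσmul, hσinv]
    have h2 : (σl.comp σl).comp (LinearMap.mulRight ℚ z) = LinearMap.mulRight ℚ z := by
      refine LinearMap.ext fun w => ?_
      simp only [LinearMap.comp_apply, hσlapp, LinearMap.mulRight_apply]
      exact hσinv _
    rw [hT, h1, ← Module.End.mul_eq_comp, LinearMap.trace_mul_comm, Module.End.mul_eq_comp,
      ← LinearMap.comp_assoc, h2]
    exact (hT' z).symm
  -- main step: T = T'
  have hTT' : ∀ z : B, T z = T' z := by
    obtain ⟨z₀, hz₀⟩ := hΦsurj (T - T')
    have hz₀' : ∀ w : B, T (z₀ * w) = T w - T' w := by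
      intro w
      have := DFunLike.congr_fun hz₀ w
      rw [hΦ] at this
      simpa using this
    have hcent : ∀ x : B, z₀ * x = x * z₀ := by
      intro x
      have key : ∀ y : B, T ((z₀ * x - x * z₀) * y) = 0 := by
        intro y
        have e1 : T (z₀ * x * y) = T (x * y) - T' (x * y) := by
          rw [mul_assoc]; exact hz₀' (x * y)
        have e2 : T (x * z₀ * y) = T (y * x) - T' (y * x) := by
          have h : T (x * z₀ * y) = T (z₀ * (y * x)) := by
            rw [mul_assoc, hTc, mul_assoc]
          rw [h]; exact hz₀' (y * x)
        rw [sub_mul, map_sub, e1, e2, hTc x y, hT'c x y]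
        ring
      have := hTnd _ key
      exact sub_eq_zero.mp this
    have hz₀c : z₀ ∈ Subalgebra.center F B :=
      Subalgebra.mem_center_iff.mpr fun b => (hcent b).symm
    obtain ⟨a, ha⟩ := Algebra.mem_bot.mp (Algebra.IsCentral.out (K := F) hz₀c)
    have hFvan : ∀ b : F, T (z₀ * algebraMap F B b) = 0 := by
      intro b
      have hcomm : T (algebraMap F B b) = T' (algebraMap F B b) := by
        rw [hT, hT']
        congr 1
        refine LinearMap.ext fun w => ?_
        simp only [LinearMap.mulLeft_apply, LinearMap.mulRight_apply]
        exact Algebra.commutes b w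
      rw [hz₀' (algebraMap F B b), hcomm, sub_self]
    have ha0 : a = 0 := by
      by_contra h
      have := hFvan a⁻¹
      rw [← ha, ← map_mul, mul_inv_cancel₀ h, map_one, hT1] at this
      exact hfr this
    have hz₀0 : z₀ = 0 := by rw [← ha, ha0, map_zero]
    intro z
    have := hz₀' z
    rw [hz₀0, zero_mul, map_zero] at this
    exact (sub_eq_zero.mp this.symm)
  have hTσ : ∀ z : B, T (σ z) = T z := fun z => (hTσT' z).trans (hTT' z).symm
  -- antisymmetry of L
  have hLanti : ∀ x y : B, L x y = - L y x := by
    intro x y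
    have h := hLalt (x + y)
    rw [hLadd₁, hLadd₂, hLadd₂, hLalt, hLalt] at h
    linarith
  -- construction of β
  set lam : Module.Dual ℚ B :=
    { toFun := fun u => L 1 u, map_add' := fun u v => hLadd₂ 1 u v,
      map_smul' := fun q u => by simpa using hLsmul₂ q 1 u } with hlamdef
  obtain ⟨β, hβ⟩ := hΦsurj (-lam)
  have hβu : ∀ u : B, T (β * u) = - L 1 u := by
    intro u
    have := DFunLike.congr_fun hβ u
    rw [hΦ] at this
    simpa [hlamdef] using this
  have hLT : ∀ x y : B, L x y = T (x * β * σ y) := by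
    intro x y
    have h2 : L y x = L 1 (σ y * x) := by
      have := hLherm y 1 x
      simpa using this
    have h3 : T (x * β * σ y) = T (β * (σ y * x)) := by
      rw [mul_assoc, hTc, mul_assoc]
    calc L x y = - L y x := hLanti x y
      _ = - L 1 (σ y * x) := by rw [h2]
      _ = T (β * (σ y * x)) := (hβu _).symm
      _ = T (x * β * σ y) := h3.symm
  -- uniqueness helper
  have huniq : ∀ β₁ β₂ : B, (∀ x y : B, T (x * β₁ * σ y) = T (x * β₂ * σ y)) → β₁ = β₂ := by
    intro β₁ β₂ h
    have h1 : ∀ x : B, T (x * (β₁ - β₂)) = 0 := by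
      intro x
      have := h x 1
      rw [hσ1, mul_one, mul_one] at this
      rw [mul_sub, map_sub, this, sub_self]
    have h2 : ∀ w : B, T ((β₁ - β₂) * w) = 0 := fun w => by rw [hTc]; exact h1 w
    exact sub_eq_zero.mp (hTnd _ h2)
  -- σ β = -β
  have hσβ : σ β = -β := by
    have hform : ∀ x y : B, T (x * (-σ β) * σ y) = T (x * β * σ y) := by
      intro x y
      have e1 : σ (y * β * σ x) = x * σ β * σ y := by
        rw [hσmul, hσinv, hσmul, ← mul_assoc]
      have e2 : T (x * σ β * σ y) = - L x y := by
        rw [← e1, hTσ, ← hLT y x, hLanti y x]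
      have e3 : x * (-σ β) * σ y = -(x * σ β * σ y) := by
        rw [mul_neg, neg_mul]
      rw [e3, map_neg, e2, neg_neg, ← hLT]
    exact neg_eq_iff_eq_neg.mp (huniq _ _ hform)
  -- invertibility
  have hinj : ∀ w : B, β * w = 0 → w = 0 := by
    intro w hw
    have h1 : ∀ x : B, L x (σ w) = 0 := by
      intro x
      rw [hLT, hσinv, mul_assoc x β w, hw, mul_zero, map_zero]
    have h2 : ∀ x : B, L (σ w) x = 0 := fun x => by rw [hLanti, h1, neg_zero]
    have h3 : σ w = 0 := hLnd _ h2
    calc w = σ (σ w) := (hσinv w).symm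
      _ = 0 := by rw [h3, hσ0]
  have hmlinj : Function.Injective (LinearMap.mulLeft ℚ β) := by
    rw [← LinearMap.ker_eq_bot, LinearMap.ker_eq_bot']
    intro w hw
    exact hinj w (by simpa using hw)
  obtain ⟨w, hw1⟩ := LinearMap.injective_iff_surjective.mp hmlinj 1
  have hw1' : β * w = 1 := by simpa using hw1
  have hw2 : w * β = 1 := by
    have h : β * (w * β - 1) = 0 := by
      rw [mul_sub, ← mul_assoc, hw1', one_mul, mul_one, sub_self]
    exact sub_eq_zero.mp (hinj _ h)
  have hUnit : IsUnit β := ⟨⟨β, w, hw1', hw2⟩, rfl⟩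
  have hRinv : Ring.inverse β = w := by
    have := Ring.inverse_unit (⟨β, w, hw1', hw2⟩ : Bˣ)
    simpa using this
  have hσw : σ w = -w := by
    have h1 : σ w * β = -1 := by
      have h := hσmul β w
      rw [hw1', hσ1, hσβ, mul_neg] at h
      have h' : σ w * β = -(1 : B) := by
        have := congrArg Neg.neg h
        simpa using this.symm
      exact h'
    calc σ w = σ w * (β * w) := by rw [hw1', mul_one]
      _ = (σ w * β) * w := by rw [mul_assoc]
      _ = (-1) * w := by rw [h1]
      _ = -w := by rw [neg_one_mul]
  -- adjoint formula
  have hadj : ∀ b x y : B, L (x * b) y = L x (y * (β * σ b * Ring.inverse β)) := by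
    intro b x y
    rw [hRinv, hLT, hLT]
    congr 1
    have e1 : σ (y * (β * σ b * w)) = (σ w * (b * σ β)) * σ y := by
      rw [hσmul, hσmul, hσmul, hσinv]
    rw [e1, hσw, hσβ]
    have e2 : (-w) * (b * -β) = w * (b * β) := by
      simp [mul_neg, neg_mul, neg_neg]
    rw [e2]
    simp only [← mul_assoc]
    rw [mul_assoc x β w, hw1', mul_one]
  refine ⟨β, hσβ, ?_, ?_, hUnit, hadj⟩
  · intro x y
    rw [hLT x y, hT]
  · intro β' _ hform'
    refine huniq β' β fun x y => ?_
    have h1 := (hform' x y).symm.trans (hLT x y)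
    rw [hT, hT]
    rw [hT] at h1
    exact h1
end

section
/- Let p be a prime and F an imaginary quadratic field in which p splits, i.e., pO_F = u·u^c for two distinct prime ideals u ≠ u^c of the ring of integers O_F. Then the set of norms {N_{F/ℚ}(x) : x ∈ F, x ≠ 0}, regarded as a subset of ℚ_p^× via the inclusion ℚ ⊆ ℚ_p, is dense in ℚ_p^× (equivalently, dense in ℚ_p \ {0} for the p-adic topology). -/
open NumberField Polynomial

/-- If a prime `k : ℤ` and an integer `m` both lie (as elements of `R`) in a proper ideal `w`,
then `k ∣ m`. -/
lemma aux_dvd_stmt10 {k m : ℤ} (hk : Prime k) {R : Type*} [CommRing R] {w : Ideal R}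
    (hw : w ≠ ⊤) (hpw : ((k:ℤ) : R) ∈ w) (hm : ((m:ℤ) : R) ∈ w) : k ∣ m := by
  by_contra h
  obtain ⟨a, bb, hab⟩ := hk.coprime_iff_not_dvd.mpr h
  apply hw
  rw [Ideal.eq_top_iff_one]
  have h1 : ((a * k + bb * m : ℤ) : R) = 1 := by rw [hab]; simp
  rw [← h1]
  push_cast
  exact Ideal.add_mem _ (Ideal.mul_mem_left _ _ hpw) (Ideal.mul_mem_left _ _ hm)

/-- In a quadratic field where `p` splits, there is an integral generator `θ` whose monic
minimal polynomial `X² + bX + c` satisfies `p ∣ c` and `p ∣ 1 + b + c`. -/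
lemma lemA_stmt10 (p : ℕ) (hp : p.Prime) (F : Type*) [Field F] [NumberField F]
    (hquad : Module.finrank ℚ F = 2)
    (hsplit : ∃ u v : Ideal (𝓞 F), u ≠ v ∧ u.IsPrime ∧ v.IsPrime ∧
      Ideal.span {(p : 𝓞 F)} = u * v) :
    ∃ (b c : ℤ) (θ : F), (p:ℤ) ∣ c ∧ (p:ℤ) ∣ (1 + b + c) ∧
      θ ∉ Set.range (algebraMap ℚ F) ∧ θ^2 + (b:F) * θ + (c:F) = 0 := by
  obtain ⟨u, v, huv, hu, hv, hfact⟩ := hsplit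
  have hprime : Prime (p:ℤ) := Nat.prime_iff_prime_int.mp hp
  have hpne : (p : 𝓞 F) ≠ 0 := Nat.cast_ne_zero.mpr hp.ne_zero
  have hpu : (p : 𝓞 F) ∈ u := Ideal.mul_le_left (by rw [← hfact]; exact Ideal.mem_span_singleton_self _)
  have hpv : (p : 𝓞 F) ∈ v := Ideal.mul_le_right (by rw [← hfact]; exact Ideal.mem_span_singleton_self _)
  have hpu' : (((p:ℤ)) : 𝓞 F) ∈ u := by exact_mod_cast hpu
  have hpv' : (((p:ℤ)) : 𝓞 F) ∈ v := by exact_mod_cast hpv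
  have hune : u ≠ ⊥ := fun h => hpne (by rw [h] at hpu; exact (Ideal.mem_bot).mp hpu)
  have hvne : v ≠ ⊥ := fun h => hpne (by rw [h] at hpv; exact (Ideal.mem_bot).mp hpv)
  have humax : u.IsMaximal := Ideal.IsPrime.isMaximal hu hune
  have hvmax : v.IsMaximal := Ideal.IsPrime.isMaximal hv hvne
  have hsup : u ⊔ v = ⊤ := Ideal.IsMaximal.coprime_of_ne humax hvmax huv
  have h1 : (1 : 𝓞 F) ∈ u ⊔ v := by rw [hsup]; trivial
  rw [Submodule.mem_sup] at h1
  obtain ⟨θO, hθu, w, hwv, hsum⟩ := h1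
  have hθv : θO - 1 ∈ v := by
    have h2 : θO - 1 = -w := by linear_combination hsum
    rw [h2]; exact neg_mem hwv
  set θ : F := algebraMap (𝓞 F) F θO with hθdef
  have hint : IsIntegral ℤ θO := IsIntegralClosure.isIntegral ℤ F θO
  have hθnotrat : θ ∉ Set.range (algebraMap ℚ F) := by
    rintro ⟨q, hq⟩
    have hqint : IsIntegral ℤ q := by
      rw [← isIntegral_algebraMap_iff (algebraMap ℚ F).injective, hq]
      exact (NumberField.RingOfIntegers.isIntegral_coe θO)
    obtain ⟨m, hm⟩ := IsIntegrallyClosed.isIntegral_iff.mp hqint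
    have hθm : θO = (m : 𝓞 F) := by
      apply NumberField.RingOfIntegers.coe_injective
      show algebraMap (𝓞 F) F θO = _
      rw [← hθdef, ← hq, ← hm]
      simp [map_intCast]
    have hdm : (p:ℤ) ∣ m :=
      aux_dvd_stmt10 hprime hu.ne_top hpu' (by rw [← hθm]; exact hθu)
    have hdm1 : (p:ℤ) ∣ (m - 1) := by
      apply aux_dvd_stmt10 hprime hv.ne_top hpv'
      have h3 : ((m - 1 : ℤ) : 𝓞 F) = θO - 1 := by rw [hθm]; push_cast; ring
      rw [h3]; exact hθv
    have h4 : (p:ℤ) ∣ 1 := by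
      have := dvd_sub hdm hdm1
      simpa using this
    have := Int.le_of_dvd one_pos h4
    have := hp.two_le
    omega
  have hθint : IsIntegral ℚ θ := IsIntegral.of_finite ℚ θ
  have hmp : minpoly ℚ θ = (minpoly ℤ θO).map (algebraMap ℤ ℚ) :=
    minpoly.isIntegrallyClosed_eq_field_fractions ℚ F hint
  have hdeg2 : (minpoly ℚ θ).natDegree = 2 := by
    have hle : (minpoly ℚ θ).natDegree ≤ 2 := hquad ▸ minpoly.natDegree_le θ
    have hpos : 0 < (minpoly ℚ θ).natDegree := minpoly.natDegree_pos hθint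
    have hne1 : (minpoly ℚ θ).natDegree ≠ 1 := fun h =>
      hθnotrat (minpoly.natDegree_eq_one_iff.mp h)
    omega
  set P : Polynomial ℤ := minpoly ℤ θO with hP
  have hmonic : P.Monic := minpoly.monic hint
  have hPdeg : P.natDegree = 2 := by
    have h5 := hmonic.natDegree_map (algebraMap ℤ ℚ)
    rw [← hmp] at h5
    omega
  set b : ℤ := P.coeff 1 with hb
  set c : ℤ := P.coeff 0 with hc
  have haev : (Polynomial.aeval θO) P = 0 := minpoly.aeval ℤ θO
  have hexp : θO^2 + (b : 𝓞 F) * θO + (c : 𝓞 F) = 0 := by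
    rw [Polynomial.aeval_eq_sum_range, hPdeg] at haev
    rw [Finset.sum_range_succ, Finset.sum_range_succ, Finset.sum_range_one] at haev
    have hc2 : P.coeff 2 = 1 := by rw [← hPdeg]; exact hmonic.coeff_natDegree
    rw [hc2] at haev
    rw [zsmul_eq_mul, zsmul_eq_mul, zsmul_eq_mul] at haev
    push_cast at haev
    linear_combination haev
  have hcu : ((c:ℤ) : 𝓞 F) ∈ u := by
    have h6 : ((c:ℤ) : 𝓞 F) = -(θO * (θO + (b : 𝓞 F))) := by linear_combination hexp
    rw [h6]; exact neg_mem (Ideal.mul_mem_right _ _ hθu)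
  have hdc : (p:ℤ) ∣ c := aux_dvd_stmt10 hprime hu.ne_top hpu' hcu
  have hbcv : ((1 + b + c : ℤ) : 𝓞 F) ∈ v := by
    have h7 : ((1 + b + c : ℤ) : 𝓞 F) = (1 + θO + (b:𝓞 F)) * (1 - θO) := by
      push_cast; linear_combination hexp
    rw [h7]
    apply Ideal.mul_mem_left
    rw [show (1:𝓞 F) - θO = -(θO - 1) by ring]
    exact neg_mem hθv
  have hdbc : (p:ℤ) ∣ (1 + b + c) := aux_dvd_stmt10 hprime hv.ne_top hpv' hbcv
  refine ⟨b, c, θ, hdc, hdbc, hθnotrat, ?_⟩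
  rw [hθdef]
  have hbc2 : ((b : 𝓞 F) : F) = (b : F) := by
    rw [NumberField.RingOfIntegers.coe_eq_algebraMap, map_intCast]
  have hcc2 : ((c : 𝓞 F) : F) = (c : F) := by
    rw [NumberField.RingOfIntegers.coe_eq_algebraMap, map_intCast]
  have h9 := congrArg (algebraMap (𝓞 F) F) hexp
  rw [map_add, map_add, map_mul, map_pow, map_zero,
    ← NumberField.RingOfIntegers.coe_eq_algebraMap,
    ← NumberField.RingOfIntegers.coe_eq_algebraMap,
    ← NumberField.RingOfIntegers.coe_eq_algebraMap, hbc2, hcc2] at h9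
  exact_mod_cast h9

/-- Quadratic roots mod `p` lift to `ℚ_[p]` by Hensel's lemma: if `p ∣ c` and `p ∣ 1 + b + c`,
then `X² + bX + c` has two distinct roots in `ℚ_[p]` (with sum `-b` and product `c`). -/
lemma lemC_stmt10 (p : ℕ) [Fact p.Prime] (b c : ℤ) (hc : (p:ℤ) ∣ c)
    (hbc : (p:ℤ) ∣ (1 + b + c)) :
    ∃ r s : ℚ_[p], r + s = -(b:ℚ_[p]) ∧ r * s = (c:ℚ_[p]) ∧ r ≠ s := by
  have hpdvd : ¬ ((p:ℤ) ∣ (2 + b)) := by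
    intro h
    have h2 := dvd_add (dvd_sub h hbc) hc
    have h3 : 2 + b - (1 + b + c) + c = 1 := by ring
    rw [h3] at h2
    have := Int.le_of_dvd one_pos h2
    have h4 := (Fact.out : p.Prime).two_le
    omega
  set G : Polynomial ℤ_[p] := X^2 + C (b:ℤ_[p]) * X + C (c:ℤ_[p]) with hG
  have hderiv : G.derivative = C 2 * X + C (b:ℤ_[p]) := by
    simp [hG, derivative_X_pow]
    rw [← C_1, ← C_add]; norm_num
  have heval1 : G.eval 1 = ((1 + b + c : ℤ) : ℤ_[p]) := by simp [hG]
  have hdeval1 : G.derivative.eval 1 = ((2 + b : ℤ) : ℤ_[p]) := by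
    rw [hderiv]; simp
  have hnd : ‖G.derivative.eval 1‖ = 1 := by
    rw [hdeval1]
    refine le_antisymm (PadicInt.norm_le_one _) ?_
    by_contra h
    push_neg at h
    exact hpdvd ((PadicInt.norm_int_lt_one_iff_dvd _).1 h)
  have hcond : ‖G.eval 1‖ < ‖G.derivative.eval 1‖ ^ 2 := by
    rw [hnd, heval1, one_pow]
    exact (PadicInt.norm_int_lt_one_iff_dvd _).2 hbc
  obtain ⟨z, hz, hzdist, -, -⟩ := hensels_lemma hcond
  have hzlt : ‖z - 1‖ < 1 := by rw [Polynomial.coe_aeval_eq_eval, hnd] at hzdist; exact hzdist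
  have hzeq : z^2 + (b:ℤ_[p]) * z + (c:ℤ_[p]) = 0 := by
    simpa [hG] using hz
  have hne : z + z + (b:ℤ_[p]) ≠ 0 := by
    intro h0
    have heq2 : ((2 + b : ℤ) : ℤ_[p]) = -((z-1) + (z-1)) := by push_cast; linear_combination h0
    have hle : ‖((2 + b : ℤ) : ℤ_[p])‖ < 1 := by
      rw [heq2, norm_neg]
      calc ‖(z-1) + (z-1)‖ ≤ max ‖z-1‖ ‖z-1‖ := PadicInt.nonarchimedean _ _
        _ = ‖z-1‖ := max_self _
        _ < 1 := hzlt
    exact hpdvd ((PadicInt.norm_int_lt_one_iff_dvd _).1 hle)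
  refine ⟨(z : ℚ_[p]), -(b:ℚ_[p]) - (z:ℚ_[p]), by ring, ?_, ?_⟩
  · have h5 : ((z^2 + (b:ℤ_[p]) * z + (c:ℤ_[p]) : ℤ_[p]) : ℚ_[p]) = 0 := by rw [hzeq]; simp
    push_cast at h5
    linear_combination -h5
  · intro h
    apply hne
    have h6 : ((z + z + (b:ℤ_[p]) : ℤ_[p]) : ℚ_[p]) = 0 := by push_cast; linear_combination h
    exact PadicInt.coe_eq_zero.1 h6

/-- If `θ` is irrational then `A + Bθ = 0` forces `A = B = 0`. -/
lemma indepAB_stmt10 (F : Type*) [Field F] [NumberField F]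
    (θ : F) (hθ : θ ∉ Set.range (algebraMap ℚ F)) (A B : ℚ)
    (h : algebraMap ℚ F A + B • θ = 0) : A = 0 ∧ B = 0 := by
  by_cases hB : B = 0
  · subst hB
    simp only [zero_smul, add_zero] at h
    exact ⟨(algebraMap ℚ F).injective (by rw [h, map_zero]), rfl⟩
  · exfalso
    apply hθ
    refine ⟨-A / B, ?_⟩
    have hBne : algebraMap ℚ F B ≠ 0 := by
      simpa using hB
    have h2 : algebraMap ℚ F B * θ = algebraMap ℚ F (-A) := by
      rw [map_neg, ← Algebra.smul_def]
      linear_combination h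
    rw [map_div₀, div_eq_iff hBne]
    linear_combination -h2

lemma liOneTheta_stmt10 (F : Type*) [Field F] [NumberField F]
    (θ : F) (hθ : θ ∉ Set.range (algebraMap ℚ F)) :
    LinearIndependent ℚ ![(1 : F), θ] := by
  rw [LinearIndependent.pair_iff]
  intro s t hst
  apply indepAB_stmt10 F θ hθ s t
  rw [← hst, Algebra.algebraMap_eq_smul_one]

/-- Norm formula in a quadratic field: if `θ² + bθ + c = 0` with `θ` irrational, then
`N(A + Bθ) = A² - ABb + B²c`. -/
lemma lemB_stmt10 (F : Type*) [Field F] [NumberField F] (hquad : Module.finrank ℚ F = 2)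
    (θ : F) (hθ : θ ∉ Set.range (algebraMap ℚ F)) (b c : ℚ)
    (heq : θ^2 + algebraMap ℚ F b * θ + algebraMap ℚ F c = 0) (A B : ℚ) :
    Algebra.norm ℚ (algebraMap ℚ F A + B • θ) = A^2 - A*B*b + B^2*c := by
  have li := liOneTheta_stmt10 F θ hθ
  have hcard : Fintype.card (Fin 2) = Module.finrank ℚ F := by simp [hquad]
  set bas := basisOfLinearIndependentOfCardEqFinrank li hcard with hbasdef
  have hbas : ⇑bas = ![(1:F), θ] := coe_basisOfLinearIndependentOfCardEqFinrank li hcard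
  have hbas0 : bas 0 = 1 := by rw [hbas]; rfl
  have hbas1 : bas 1 = θ := by rw [hbas]; rfl
  set x : F := algebraMap ℚ F A + B • θ with hx
  have hx0 : x * bas 0 = A • bas 0 + B • bas 1 := by
    rw [hbas0, hbas1, hx]
    simp only [Algebra.smul_def]
    ring
  have hx1 : x * bas 1 = (-(B*c)) • bas 0 + (A - B*b) • bas 1 := by
    rw [hbas0, hbas1, hx]
    simp only [Algebra.smul_def, map_neg, map_mul, map_sub]
    linear_combination (algebraMap ℚ F B) * heq
  have hrepr0 : ∀ (s t : ℚ), bas.repr (s • bas 0 + t • bas 1) 0 = s := by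
    intro s t; simp [map_add, map_smul, Module.Basis.repr_self]
  have hrepr1 : ∀ (s t : ℚ), bas.repr (s • bas 0 + t • bas 1) 1 = t := by
    intro s t; simp [map_add, map_smul, Module.Basis.repr_self]
  rw [Algebra.norm_eq_matrix_det bas, Matrix.det_fin_two]
  rw [Algebra.leftMulMatrix_eq_repr_mul, Algebra.leftMulMatrix_eq_repr_mul,
    Algebra.leftMulMatrix_eq_repr_mul, Algebra.leftMulMatrix_eq_repr_mul]
  rw [hx0, hx1, hrepr0, hrepr1, hrepr0, hrepr1]
  ring

lemma dense_rat_stmt10 (p : ℕ) [Fact p.Prime] :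
    DenseRange (fun q : ℚ => (q : ℚ_[p])) := by
  rw [Metric.denseRange_iff]
  intro y ε hε
  obtain ⟨r, hr⟩ := Padic.rat_dense p y hε
  exact ⟨r, by rwa [dist_eq_norm]⟩

/-- Let `F` be an imaginary quadratic field in which the prime `p` splits.  Then the set of
norms `N_{F/ℚ}(x)` of nonzero elements `x ∈ F`, viewed inside `ℚ_p` via `ℚ ⊆ ℚ_p`, is dense
in `ℚ_p ∖ {0}` (i.e. dense in `ℚ_p^×`). -/
theorem stmt_10 (p : ℕ) [Fact (Nat.Prime p)]
    (F : Type*) [Field F] [NumberField F]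
    (hquad : Module.finrank ℚ F = 2)
    (himag : IsEmpty (F →+* ℝ))
    (hsplit : ∃ u v : Ideal (𝓞 F), u ≠ v ∧ u.IsPrime ∧ v.IsPrime ∧
      Ideal.span {(p : 𝓞 F)} = u * v) :
    ∀ y : ℚ_[p], y ≠ 0 →
      y ∈ closure {z : ℚ_[p] | ∃ x : F, x ≠ 0 ∧ z = ((Algebra.norm ℚ x : ℚ) : ℚ_[p])} := by
  obtain ⟨b, c, θ, hdc, hdbc, hθ, heqF⟩ :=
    lemA_stmt10 p (Fact.out : p.Prime) F hquad hsplit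
  have heqF' : θ^2 + algebraMap ℚ F (b:ℚ) * θ + algebraMap ℚ F (c:ℚ) = 0 := by
    rw [map_intCast, map_intCast]
    exact heqF
  have hnormF : ∀ A B : ℚ, Algebra.norm ℚ (algebraMap ℚ F A + B • θ)
      = A^2 - A*B*(b:ℚ) + B^2*(c:ℚ) :=
    lemB_stmt10 F hquad θ hθ (b:ℚ) (c:ℚ) heqF'
  obtain ⟨r, s, hsum, hmul, hne⟩ := lemC_stmt10 p b c hdc hdbc
  intro y hy
  rw [Metric.mem_closure_iff]
  intro ε hε
  set Bs : ℚ_[p] := (y - 1) / (r - s) with hBs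
  set As : ℚ_[p] := 1 - Bs * s with hAs
  have hrs : r - s ≠ 0 := sub_ne_zero.mpr hne
  have key1 : As + Bs * s = 1 := by rw [hAs]; ring
  have key2 : As + Bs * r = y := by
    rw [hAs, hBs]
    field_simp
    ring
  set T : ℚ_[p] × ℚ_[p] → ℚ_[p] := fun q => (q.1 + q.2 * r) * (q.1 + q.2 * s) with hT
  have hTc : Continuous T := by fun_prop
  have hSc : Continuous (fun q : ℚ_[p] × ℚ_[p] => q.1 + q.2 * s) := by fun_prop
  set U : Set (ℚ_[p] × ℚ_[p]) :=
    T ⁻¹' Metric.ball y ε ∩ (fun q : ℚ_[p] × ℚ_[p] => q.1 + q.2 * s) ⁻¹' Metric.ball 1 1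
    with hU
  have hUopen : IsOpen U :=
    (hTc.isOpen_preimage _ Metric.isOpen_ball).inter
      (hSc.isOpen_preimage _ Metric.isOpen_ball)
  have hUne : U.Nonempty := by
    refine ⟨(As, Bs), ?_, ?_⟩
    · show T (As, Bs) ∈ Metric.ball y ε
      have hTval : T (As, Bs) = y := by
        rw [hT]
        show (As + Bs * r) * (As + Bs * s) = y
        rw [key1, key2, mul_one]
      rw [hTval]
      exact Metric.mem_ball_self hε
    · show As + Bs * s ∈ Metric.ball 1 1
      rw [key1]
      exact Metric.mem_ball_self one_pos
  have hD : DenseRange (Prod.map (fun q : ℚ => (q : ℚ_[p])) (fun q : ℚ => (q : ℚ_[p]))) :=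
    (dense_rat_stmt10 p).prodMap (dense_rat_stmt10 p)
  obtain ⟨⟨A, B⟩, hmem⟩ := hD.exists_mem_open hUopen hUne
  simp only [Prod.map_apply] at hmem
  obtain ⟨hmem1, hmem2⟩ := hmem
  set x : F := algebraMap ℚ F A + B • θ with hx
  have hxne : x ≠ 0 := by
    intro h0
    obtain ⟨hA0, hB0⟩ := indepAB_stmt10 F θ hθ A B h0
    rw [Set.mem_preimage, hA0, hB0] at hmem2
    simp only [Rat.cast_zero, zero_mul, add_zero, Metric.mem_ball] at hmem2
    rw [dist_eq_norm, zero_sub, norm_neg, norm_one] at hmem2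
    exact lt_irrefl _ hmem2
  refine ⟨((Algebra.norm ℚ x : ℚ) : ℚ_[p]), ⟨x, hxne, rfl⟩, ?_⟩
  have hcast : ((Algebra.norm ℚ x : ℚ) : ℚ_[p]) = T ((A : ℚ_[p]), (B : ℚ_[p])) := by
    rw [hx, hnormF A B, hT]
    show _ = ((A:ℚ_[p]) + (B:ℚ_[p]) * r) * ((A:ℚ_[p]) + (B:ℚ_[p]) * s)
    push_cast
    linear_combination (-((A:ℚ_[p]) * (B:ℚ_[p]))) * hsum - ((B:ℚ_[p])^2) * hmul
  rw [hcast]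
  rw [Set.mem_preimage, Metric.mem_ball] at hmem1
  rw [dist_comm]
  exact hmem1
end

section
/- Let ℓ be a prime, K a quadratic field extension of ℚ_ℓ with ring of integers O and uniformizer π, and W a finite-dimensional K-vector space with a nondegenerate hermitian form (−,−). Let g be a K-linear automorphism of W which is a similitude: there exists ν ∈ ℚ_ℓ^× with (g(v), g(w)) = ν·(v, w) for all v, w ∈ W. Let k = v_K(ν), where v_K is the valuation of K normalized so that v_K(π) = 1. Suppose L is a lattice in W homothetic to a preferred lattice. Then: if k is even, g(L) is homothetic to a preferred lattice; and if k is odd, the dual lattice (g(L))^# is homothetic to a preferred lattice. -/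
open scoped Pointwise

section Setup

variable {ℓ : ℕ} [Fact (Nat.Prime ℓ)]
variable {K : Type*} [Field K] [Algebra ℚ_[ℓ] K]
variable {W : Type*} [AddCommGroup W] [Module K W]

/-- A lattice in `W` relative to the subring `O ⊆ K`: a finitely generated `O`-submodule
of `W` which spans `W` over `K`. -/
def IsLat (O : Subring K) (L : Set W) : Prop :=
  (0 : W) ∈ L ∧
  (∀ x ∈ L, ∀ y ∈ L, x + y ∈ L) ∧
  (∀ x ∈ L, -x ∈ L) ∧
  (∀ a ∈ O, ∀ x ∈ L, a • x ∈ L) ∧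
  (∃ s : Finset W, ↑s ⊆ L ∧
    ∀ x ∈ L, ∃ a : W → K, (∀ i ∈ s, a i ∈ O) ∧ x = ∑ i ∈ s, a i • i) ∧
  Submodule.span K L = ⊤

/-- The dual of a subset `L ⊆ W` with respect to the hermitian form `B`:
`L^# = {w : (w, x) ∈ O for all x ∈ L}`. -/
def dualLat (O : Subring K) (B : W → W → K) (L : Set W) : Set W :=
  {w : W | ∀ x ∈ L, B w x ∈ O}

/-- A lattice is preferred if `L ⊆ L^# ⊆ π⁻¹L`. -/
def Preferred (O : Subring K) (B : W → W → K) (π : K) (L : Set W) : Prop :=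
  L ⊆ dualLat O B L ∧ dualLat O B L ⊆ π⁻¹ • L

end Setup

/-- Let `g` be a similitude of `(W, B)` with multiplier `ν ∈ ℚ_ℓ^×` of valuation `k`, and
let `L` be a lattice homothetic to a preferred lattice.  If `k` is even then `g(L)` is
homothetic to a preferred lattice, and if `k` is odd then `(g(L))^#` is homothetic to a
preferred lattice. -/
theorem stmt_15 (ℓ : ℕ) [Fact (Nat.Prime ℓ)]
    (K : Type*) [Field K] [Algebra ℚ_[ℓ] K] [Algebra ℤ_[ℓ] K] [IsScalarTower ℤ_[ℓ] ℚ_[ℓ] K]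
    (hquad : Module.finrank ℚ_[ℓ] K = 2)
    (c : K ≃ₐ[ℚ_[ℓ]] K) (hc : c ≠ AlgEquiv.refl)
    (O : Subring K) (hO : O = (integralClosure ℤ_[ℓ] K).toSubring)
    (π : K) (hπO : π ∈ O) (hπ0 : π ≠ 0) (hπu : π⁻¹ ∉ O)
    (hπgen : ∀ x ∈ O, x⁻¹ ∉ O → ∃ y ∈ O, x = π * y)
    (W : Type*) [AddCommGroup W] [Module K W] [FiniteDimensional K W]
    (B : W → W → K)
    (hBadd : ∀ v v' w : W, B (v + v') w = B v w + B v' w)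
    (hBsmul : ∀ (a : K) (v w : W), B (a • v) w = a * B v w)
    (hBherm : ∀ v w : W, B v w = c (B w v))
    (hBnd : ∀ v : W, (∀ w : W, B v w = 0) → v = 0)
    (g : W ≃ₗ[K] W) (ν : ℚ_[ℓ]) (hν : ν ≠ 0)
    (hgsim : ∀ v w : W, B (g v) (g w) = algebraMap ℚ_[ℓ] K ν * B v w)
    (k : ℤ)
    (hk : ∃ u : K, u ∈ O ∧ u⁻¹ ∈ O ∧ algebraMap ℚ_[ℓ] K ν = u * π ^ k)
    (L : Set W) (hL : IsLat O L)
    (hhom : ∃ m : ℤ, Preferred O B π ((π ^ m) • L)) :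
    (Even k → ∃ m : ℤ, Preferred O B π ((π ^ m) • (⇑g '' L))) ∧
    (Odd k → ∃ m : ℤ, Preferred O B π ((π ^ m) • dualLat O B (⇑g '' L))) := by
  classical
  obtain ⟨u, huO, huiO, hA⟩ := hk
  obtain ⟨m, hm1, hm2⟩ := hhom
  -- basic nonvanishing facts
  have hA0 : algebraMap ℚ_[ℓ] K ν ≠ 0 := by
    intro h
    exact hν ((algebraMap ℚ_[ℓ] K).injective (by simpa using h))
  have hπz : ∀ n : ℤ, (π : K) ^ n ≠ 0 := fun n => zpow_ne_zero n hπ0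
  have hu0 : u ≠ 0 := by
    intro h
    rw [h, zero_mul] at hA
    exact hA0 hA
  -- c and c.symm preserve O
  have hcmem : ∀ x ∈ O, c x ∈ O := by
    intro x hx
    rw [hO] at hx ⊢
    have h : IsIntegral ℤ_[ℓ] x := hx
    exact h.map (AlgEquiv.restrictScalars ℤ_[ℓ] c)
  have hcmem' : ∀ x ∈ O, c.symm x ∈ O := by
    intro x hx
    rw [hO] at hx ⊢
    have h : IsIntegral ℤ_[ℓ] x := hx
    exact h.map (AlgEquiv.restrictScalars ℤ_[ℓ] c.symm)
  -- the unit y with c π = π * y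
  have hcπO : c π ∈ O := hcmem π hπO
  have hcπinv : (c π)⁻¹ ∉ O := by
    intro h
    apply hπu
    have h2 : c.symm ((c π)⁻¹) ∈ O := hcmem' _ h
    rwa [map_inv₀, AlgEquiv.symm_apply_apply] at h2
  obtain ⟨y, hyO, hcπy⟩ := hπgen (c π) hcπO hcπinv
  have hsymmO : c.symm π ∈ O := hcmem' π hπO
  have hsymminv : (c.symm π)⁻¹ ∉ O := by
    intro h
    apply hπu
    have h2 : c ((c.symm π)⁻¹) ∈ O := hcmem _ h
    rwa [map_inv₀, AlgEquiv.apply_symm_apply] at h2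
  obtain ⟨z, hzO, hsymm⟩ := hπgen (c.symm π) hsymmO hsymminv
  have h1 : π = π * (y * c z) := by
    conv_lhs => rw [← c.apply_symm_apply π]
    rw [hsymm, map_mul, hcπy]
    ring
  have hyz : y * c z = 1 := (mul_left_cancel₀ hπ0 (by rw [mul_one, ← h1])).symm
  have hyinvO : y⁻¹ ∈ O := by
    rw [inv_eq_of_mul_eq_one_right hyz]
    exact hcmem z hzO
  have hy0 : y ≠ 0 := left_ne_zero_of_mul_eq_one hyz
  -- powers of units lie in O
  have hOzpow : ∀ (w : K), w ∈ O → w⁻¹ ∈ O → ∀ n : ℤ, w ^ n ∈ O := by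
    intro w hw hwi n
    rcases n with n | n
    · simpa using pow_mem hw n
    · rw [zpow_negSucc, ← inv_pow]
      exact pow_mem hwi _
  -- set manipulation helpers
  have hss : ∀ (a b : K) (S : Set W), a • b • S = (a * b) • S := fun a b S => (mul_smul a b S).symm
  have hstabD : ∀ S : Set W, ∀ a ∈ O, ∀ x ∈ dualLat O B S, a • x ∈ dualLat O B S := by
    intro S a ha x hx w hw
    rw [hBsmul]
    exact mul_mem ha (hx w hw)
  have hstabsmul : ∀ (aK : K) (S : Set W), (∀ a ∈ O, ∀ x ∈ S, a • x ∈ S) →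
      ∀ a ∈ O, ∀ x ∈ aK • S, a • x ∈ aK • S := by
    intro aK S hS a ha x hx
    obtain ⟨v, hv, rfl⟩ := Set.mem_smul_set.mp hx
    refine Set.mem_smul_set.mpr ⟨a • v, hS a ha v hv, ?_⟩
    rw [smul_smul, smul_smul, mul_comm]
  have habs : ∀ (w : K), w ∈ O → w⁻¹ ∈ O → w ≠ 0 → ∀ S : Set W,
      (∀ a ∈ O, ∀ x ∈ S, a • x ∈ S) → w • S = S := by
    intro w hw hwi hw0 S hS
    apply Set.Subset.antisymm
    · intro x hx
      obtain ⟨v, hv, rfl⟩ := Set.mem_smul_set.mp hx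
      exact hS w hw v hv
    · intro x hx
      exact Set.mem_smul_set.mpr ⟨w⁻¹ • x, hS w⁻¹ hwi x hx,
        by rw [smul_smul, mul_inv_cancel₀ hw0, one_smul]⟩
  -- second-variable behaviour of B
  have hB2 : ∀ (a : K) (v w : W), B v (a • w) = c a * B v w := by
    intro a v w
    rw [hBherm v (a • w), hBsmul, map_mul, ← hBherm]
  -- dual of scaled set
  have hdualsmul : ∀ (a : K), a ≠ 0 → ∀ S : Set W,
      dualLat O B (a • S) = (c a)⁻¹ • dualLat O B S := by
    intro a ha S
    have hca : c a ≠ 0 := fun h => ha (by apply c.injective; rw [map_zero]; exact h)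
    ext w
    constructor
    · intro hw
      refine Set.mem_smul_set.mpr ⟨c a • w, ?_, by rw [smul_smul, inv_mul_cancel₀ hca, one_smul]⟩
      intro x hx
      have h2 := hw (a • x) (Set.mem_smul_set.mpr ⟨x, hx, rfl⟩)
      rw [hB2] at h2
      rw [hBsmul]
      exact h2
    · intro hw x hx
      obtain ⟨v, hv, rfl⟩ := Set.mem_smul_set.mp hw
      obtain ⟨x', hx', rfl⟩ := Set.mem_smul_set.mp hx
      rw [hBsmul, hB2, ← mul_assoc, inv_mul_cancel₀ hca, one_mul]
      exact hv x' hx'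
  -- dual of image under g
  have hdualg : ∀ S : Set W,
      dualLat O B (⇑g '' S) = ⇑g '' ((algebraMap ℚ_[ℓ] K ν)⁻¹ • dualLat O B S) := by
    intro S
    ext w
    constructor
    · intro hw
      refine ⟨g.symm w, ?_, by simp⟩
      refine Set.mem_smul_set.mpr ⟨algebraMap ℚ_[ℓ] K ν • g.symm w, ?_,
        by rw [smul_smul, inv_mul_cancel₀ hA0, one_smul]⟩
      intro x hx
      have h2 := hw (g x) ⟨x, hx, rfl⟩
      have h3 : B w (g x) = algebraMap ℚ_[ℓ] K ν * B (g.symm w) x := by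
        conv_lhs => rw [← g.apply_symm_apply w]
        rw [hgsim]
      rw [h3] at h2
      rw [hBsmul]
      exact h2
    · rintro ⟨v, hv, rfl⟩ x ⟨x', hx', rfl⟩
      obtain ⟨v', hv', rfl⟩ := Set.mem_smul_set.mp hv
      rw [map_smul, hBsmul, hgsim, ← mul_assoc, inv_mul_cancel₀ hA0, one_mul]
      exact hv' x' hx'
  -- image commutes with scaling
  have himg : ∀ (a : K) (S : Set W), ⇑g '' (a • S) = a • (⇑g '' S) := by
    intro a S
    ext x
    constructor
    · rintro ⟨v, hv, rfl⟩
      obtain ⟨v', hv', rfl⟩ := Set.mem_smul_set.mp hv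
      exact Set.mem_smul_set.mpr ⟨g v', ⟨v', hv', rfl⟩, (map_smul g a v').symm⟩
    · intro hx
      obtain ⟨v, hv, rfl⟩ := Set.mem_smul_set.mp hx
      obtain ⟨v', hv', rfl⟩ := hv
      exact ⟨a • v', Set.mem_smul_set.mpr ⟨v', hv', rfl⟩, map_smul g a v'⟩
  -- the key scalar collapsing identity
  have hcollapse : ∀ (r s : ℤ) (S : Set W), (∀ a ∈ O, ∀ x ∈ S, a • x ∈ S) →
      (π ^ r) • ((algebraMap ℚ_[ℓ] K ν)⁻¹ • ((c (π ^ s))⁻¹ • S)) = (π ^ (r - k - s)) • S := by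
    intro r s S hS
    have hsc : ((π : K) ^ r * (algebraMap ℚ_[ℓ] K ν)⁻¹) * (c (π ^ s))⁻¹
        = (u⁻¹ * y ^ (-s)) * π ^ (r - k - s) := by
      rw [map_zpow₀, hcπy, mul_zpow, hA, mul_inv, mul_inv, ← zpow_neg, ← zpow_neg, ← zpow_neg]
      rw [show r - k - s = r + -k + -s by ring, zpow_add₀ hπ0, zpow_add₀ hπ0]
      ring
    rw [hss, hss, hsc, ← hss]
    refine habs _ (mul_mem huiO (hOzpow y hyO hyinvO (-s))) ?_ ?_ _ (hstabsmul _ _ hS)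
    · rw [mul_inv, inv_inv, zpow_neg, inv_inv]
      exact mul_mem huO (hOzpow y hyO hyinvO s)
    · exact mul_ne_zero (inv_ne_zero hu0) (zpow_ne_zero _ hy0)
  -- lattice inclusions
  have hED : dualLat O B (dualLat O B ((π ^ m) • L)) ⊆ dualLat O B ((π ^ m) • L) :=
    fun x hx w hw => hx w (hm1 hw)
  have hπDE : ∀ d ∈ dualLat O B ((π ^ m) • L),
      π • d ∈ dualLat O B (dualLat O B ((π ^ m) • L)) := by
    intro d hd w hw
    obtain ⟨v, hv, rfl⟩ := Set.mem_smul_set.mp (hm2 hw)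
    rw [hBsmul, hB2, map_inv₀, hcπy, mul_inv, ← mul_assoc, ← mul_assoc,
      mul_inv_cancel₀ hπ0, one_mul]
    exact mul_mem hyinvO (hd v hv)
  constructor
  · -- even case
    rintro ⟨t, ht⟩
    refine ⟨m - t, ?_, ?_⟩ <;>
    · have e1 : (π ^ (m - t)) • (⇑g '' L) = ⇑g '' ((π ^ (-t : ℤ)) • ((π ^ m) • L)) := by
        rw [hss, ← zpow_add₀ hπ0, show (-t) + m = m - t by ring, himg]
      have e2 : dualLat O B (⇑g '' ((π ^ (-t : ℤ)) • ((π ^ m) • L)))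
          = ⇑g '' ((π ^ (-t : ℤ)) • dualLat O B ((π ^ m) • L)) := by
        rw [hdualg, hdualsmul _ (hπz (-t))]
        have h := hcollapse 0 (-t) (dualLat O B ((π ^ m) • L)) (hstabD _)
        rw [zpow_zero, one_smul, show (0 : ℤ) - k - (-t) = -t by omega] at h
        rw [h]
      first
      | · rw [e1, e2]
          exact Set.image_mono (Set.smul_set_mono hm1)
      | · rw [e1, e2, ← himg]
          refine Set.image_mono ?_
          rw [hss, mul_comm, ← hss]
          exact Set.smul_set_mono hm2
  · -- odd case
    rintro ⟨t, ht⟩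
    have hLeq : L = (π ^ (-m : ℤ)) • ((π ^ m) • L) := by
      rw [hss, ← zpow_add₀ hπ0, show (-m) + m = 0 by ring, zpow_zero, one_smul]
    have hLdual : dualLat O B L = (c (π ^ (-m : ℤ)))⁻¹ • dualLat O B ((π ^ m) • L) := by
      conv_lhs => rw [hLeq]
      exact hdualsmul _ (hπz (-m)) _
    have e3 : (π ^ (t + 1 - m)) • dualLat O B (⇑g '' L)
        = ⇑g '' ((π ^ (-t : ℤ)) • dualLat O B ((π ^ m) • L)) := by
      rw [hdualg, hLdual, ← himg, hcollapse (t + 1 - m) (-m) _ (hstabD _),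
        show t + 1 - m - k - (-m) = -t by omega]
    have e4 : dualLat O B (⇑g '' ((π ^ (-t : ℤ)) • dualLat O B ((π ^ m) • L)))
        = ⇑g '' ((π ^ (-t - 1 : ℤ)) • dualLat O B (dualLat O B ((π ^ m) • L))) := by
      rw [hdualg, hdualsmul _ (hπz (-t))]
      have h := hcollapse 0 (-t) (dualLat O B (dualLat O B ((π ^ m) • L)))
        (hstabD (dualLat O B ((π ^ m) • L)))
      rw [zpow_zero, one_smul, show (0 : ℤ) - k - (-t) = -t - 1 by omega] at h
      rw [h]
    refine ⟨t + 1 - m, ?_, ?_⟩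
    · rw [e3, e4]
      refine Set.image_mono ?_
      intro x hx
      obtain ⟨d, hd, rfl⟩ := Set.mem_smul_set.mp hx
      refine Set.mem_smul_set.mpr ⟨π • d, hπDE d hd, ?_⟩
      rw [smul_smul, show (π : K) ^ (-t - 1 : ℤ) * π = π ^ (-t : ℤ) by
        rw [← zpow_add_one₀ hπ0, show (-t - 1 + 1 : ℤ) = -t by ring]]
    · rw [e3, e4, ← himg]
      refine Set.image_mono ?_
      rw [hss, show (π : K)⁻¹ * π ^ (-t : ℤ) = π ^ (-t - 1 : ℤ) by
        rw [mul_comm, ← zpow_sub_one₀ hπ0]]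
      exact Set.smul_set_mono hED
end

section
/- Let p be a prime, n a positive integer, and k an integer coprime to p. Then the rational number (k^n − 1)·B_n/n is p-integral, i.e., its p-adic valuation is nonnegative (it lies in the localization ℤ_(p) ⊆ ℚ), where B_n denotes the n-th Bernoulli number. -/
open PowerSeries Finset Nat

lemma LS_tele {R : Type*} [CommRing R] (x : R) (n : ℕ) :
    (∑ a ∈ Finset.range n, (a : R) * x ^ a) * (x - 1)
      = (n : R) * x ^ n - x * ∑ a ∈ Finset.range n, x ^ a := by
  induction n with
  | zero => simp
  | succ n ih =>
    rw [Finset.sum_range_succ, Finset.sum_range_succ, add_mul, ih]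
    push_cast
    ring

lemma LS_series (k : ℕ) :
    (∑ a ∈ Finset.range k, (a : ℚ⟦X⟧) * exp ℚ ^ a)
      = (∑ a ∈ Finset.range k, exp ℚ ^ a)
        * PowerSeries.mk (fun m => ((k : ℚ) ^ (m+1) - 1) * bernoulli' (m+1) / (m+1)!) := by
  set E := exp ℚ with hE
  set B := bernoulli'PowerSeries ℚ with hB
  set Cs := PowerSeries.mk (fun m => ((k : ℚ) ^ (m+1) - 1) * bernoulli' (m+1) / (m+1)!) with hCs
  set G := ∑ a ∈ Finset.range k, E ^ a with hG
  have h1 : G * (E - 1) = E ^ k - 1 := geom_sum_mul E k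
  have h2 : B * (E - 1) = X * E := bernoulli'PowerSeries_mul_exp_sub_one ℚ
  have hEk : E ^ k = rescale (k : ℚ) E := exp_pow_eq_rescale_exp (A := ℚ) k
  have h3 : rescale (k : ℚ) B * (E ^ k - 1) = (C (k : ℚ) * X) * E ^ k := by
    rw [hEk]
    calc rescale (k:ℚ) B * (rescale (k:ℚ) E - 1)
        = rescale (k:ℚ) (B * (E - 1)) := by rw [map_mul, map_sub, map_one]
      _ = rescale (k:ℚ) (X * E) := by rw [h2]
      _ = (C (k:ℚ) * X) * rescale (k:ℚ) E := by rw [map_mul, rescale_X]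
  have h5 : X * Cs = rescale (k : ℚ) B - B := by
    ext m
    cases m with
    | zero =>
        rw [show (0:ℕ) = 0 + 0 from rfl, coeff_mul]
        simp [hB, bernoulli'PowerSeries, coeff_rescale, Finset.Nat.antidiagonal_zero,
          ← coeff_zero_eq_constantCoeff, coeff_rescale]
    | succ m =>
        rw [coeff_succ_X_mul]
        simp only [hCs, coeff_mk, map_sub, hB, bernoulli'PowerSeries, coeff_rescale, coeff_mk]
        simp only [Algebra.algebraMap_self, RingHom.id_apply]
        ring
  have hE1 : E - 1 ≠ 0 := by
    intro h
    have := congrArg (coeff 1) h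
    simp [hE, coeff_exp] at this
  have hX : (X : ℚ⟦X⟧) ≠ 0 := X_ne_zero
  have hcancel : (E - 1) * X ≠ 0 := mul_ne_zero hE1 hX
  apply mul_right_cancel₀ hcancel
  calc (∑ a ∈ Finset.range k, (a : ℚ⟦X⟧) * E ^ a) * ((E - 1) * X)
      = ((∑ a ∈ Finset.range k, (a : ℚ⟦X⟧) * E ^ a) * (E - 1)) * X := by ring
    _ = ((k : ℚ⟦X⟧) * E ^ k - E * G) * X := by rw [LS_tele]
    _ = (C (k:ℚ) * X) * E ^ k - G * (X * E) := by
        rw [map_natCast (C (R := ℚ)) k]; ring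
    _ = rescale (k : ℚ) B * (E ^ k - 1) - G * (B * (E - 1)) := by rw [h3, h2]
    _ = (G * (E - 1)) * rescale (k : ℚ) B - G * (B * (E - 1)) := by rw [h1]; ring
    _ = G * (rescale (k : ℚ) B - B) * (E - 1) := by ring
    _ = G * (X * Cs) * (E - 1) := by rw [h5]
    _ = G * Cs * ((E - 1) * X) := by ring

lemma LS_rec (k : ℕ) (m : ℕ) :
    ∑ a ∈ Finset.range k, (a : ℚ) ^ (m+1)
      = ∑ u ∈ Finset.range (m+1), (m.choose u : ℚ) * (∑ a ∈ Finset.range k, (a : ℚ) ^ u)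
          * (((k : ℚ) ^ (m-u+1) - 1) * bernoulli' (m-u+1) / ((m-u : ℕ) + 1 : ℚ)) := by
  have hfac : ∀ j : ℕ, (j ! : ℚ) ≠ 0 := fun j => by exact_mod_cast (Nat.factorial_pos j).ne'
  have hG : ∀ u : ℕ, coeff u (∑ a ∈ Finset.range k, exp ℚ ^ a)
      = (∑ a ∈ Finset.range k, (a : ℚ) ^ u) / u ! := by
    intro u
    rw [map_sum, Finset.sum_div]
    refine Finset.sum_congr rfl fun a _ => ?_
    rw [exp_pow_eq_rescale_exp (A := ℚ), coeff_rescale, coeff_exp]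
    simp only [Algebra.algebraMap_self, RingHom.id_apply]
    rw [one_div, div_eq_mul_inv]
  have hL : coeff m (∑ a ∈ Finset.range k, (a : ℚ⟦X⟧) * exp ℚ ^ a)
      = (∑ a ∈ Finset.range k, (a : ℚ) ^ (m+1)) / m ! := by
    rw [map_sum, Finset.sum_div]
    refine Finset.sum_congr rfl fun a _ => ?_
    rw [← map_natCast (C (R := ℚ)) a, coeff_C_mul, exp_pow_eq_rescale_exp (A := ℚ), coeff_rescale,
      coeff_exp]
    simp only [Algebra.algebraMap_self, RingHom.id_apply]
    rw [pow_succ]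
    field_simp
  have h := congrArg (coeff m) (LS_series k)
  rw [hL, coeff_mul, Finset.Nat.sum_antidiagonal_eq_sum_range_succ_mk] at h
  simp only [coeff_mk, hG] at h
  rw [div_eq_iff (hfac m)] at h
  rw [h, Finset.sum_mul]
  refine Finset.sum_congr rfl fun u hu => ?_
  have hum : u ≤ m := Nat.lt_succ_iff.mp (Finset.mem_range.mp hu)
  rw [Nat.cast_choose ℚ hum, Nat.factorial_succ (m - u)]
  have h1 := hfac u
  have h2 := hfac (m - u)
  have h3 : ((m - u : ℕ) : ℚ) + 1 ≠ 0 := by positivity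
  push_cast
  field_simp

lemma LS_norm (p : ℕ) [Fact p.Prime] (k : ℕ) (hk : ¬ p ∣ k) :
    ∀ n : ℕ, padicNorm p (((k : ℚ) ^ (n+1) - 1) * bernoulli' (n+1) / ((n : ℕ) + 1 : ℚ)) ≤ 1 := by
  have hnat : ∀ m : ℕ, padicNorm p ((m : ℚ)) ≤ 1 := fun m => padicNorm.of_nat m
  have hsum : ∀ (j : ℕ), padicNorm p (∑ a ∈ Finset.range k, (a : ℚ) ^ j) ≤ 1 := by
    intro j
    have : (∑ a ∈ Finset.range k, (a : ℚ) ^ j) = ((∑ a ∈ Finset.range k, a ^ j : ℕ) : ℚ) := by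
      push_cast; ring
    rw [this]; exact hnat _
  intro n
  induction n using Nat.strong_induction_on with
  | _ n ih =>
    have hrec := LS_rec k n
    rw [Finset.sum_range_succ'] at hrec
    simp only [Nat.choose_zero_right, pow_zero, Finset.sum_const, Finset.card_range,
      nsmul_eq_mul, mul_one, Nat.cast_one, one_mul, Nat.sub_zero] at hrec
    have key : (k : ℚ) * (((k : ℚ) ^ (n+1) - 1) * bernoulli' (n+1) / ((n : ℕ) + 1 : ℚ))
        = (∑ a ∈ Finset.range k, (a : ℚ) ^ (n+1))
        - ∑ u ∈ Finset.range n, (n.choose (u+1) : ℚ) * (∑ a ∈ Finset.range k, (a : ℚ) ^ (u+1))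
            * (((k : ℚ) ^ (n-(u+1)+1) - 1) * bernoulli' (n-(u+1)+1) / ((n-(u+1) : ℕ) + 1 : ℚ)) := by
      rw [eq_sub_iff_add_eq, add_comm]
      exact hrec.symm
    have hbound : padicNorm p ((k : ℚ) * (((k : ℚ) ^ (n+1) - 1) * bernoulli' (n+1)
        / ((n : ℕ) + 1 : ℚ))) ≤ 1 := by
      rw [key]
      refine le_trans padicNorm.sub (max_le (hsum _) ?_)
      refine padicNorm.sum_le' (fun u hu => ?_) zero_le_one
      have hu' := Finset.mem_range.mp hu
      rw [padicNorm.mul, padicNorm.mul]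
      have h1 : padicNorm p ((n.choose (u+1) : ℚ)) ≤ 1 := hnat _
      have h2 := hsum (u+1)
      have h3 : padicNorm p (((k : ℚ) ^ (n-(u+1)+1) - 1) * bernoulli' (n-(u+1)+1)
          / ((n-(u+1) : ℕ) + 1 : ℚ)) ≤ 1 := ih _ (by omega)
      calc padicNorm p ((n.choose (u+1) : ℚ)) * padicNorm p (∑ a ∈ Finset.range k, (a:ℚ)^(u+1))
            * padicNorm p (((k : ℚ) ^ (n-(u+1)+1) - 1) * bernoulli' (n-(u+1)+1)
              / ((n-(u+1) : ℕ) + 1 : ℚ))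
          ≤ 1 * 1 * 1 := by
            gcongr <;> first | exact padicNorm.nonneg _ | assumption
        _ = 1 := by norm_num
    rw [padicNorm.mul, (padicNorm.nat_eq_one_iff k).mpr hk, one_mul] at hbound
    exact hbound

lemma LS_exists (p : ℕ) [hp : Fact p.Prime] {q : ℚ} (h : padicNorm p q ≤ 1) :
    ∃ a b : ℤ, b ≠ 0 ∧ ¬ (p : ℤ) ∣ b ∧ q = (a : ℚ) / (b : ℚ) := by
  refine ⟨q.num, q.den, Int.natCast_ne_zero.mpr q.den_nz, ?_, by
    exact_mod_cast (Rat.num_div_den q).symm⟩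
  intro hdvd
  have hd : p ∣ q.den := Int.ofNat_dvd.mp hdvd
  by_cases hq : q = 0
  · rw [hq] at hd
    simp at hd
    exact hp.out.one_lt.ne' hd
  · have hnum : ¬ (p : ℤ) ∣ q.num := by
      intro hn
      have h1 : p ∣ q.num.natAbs := Int.natAbs_dvd_natAbs.mpr (by simpa using hn)
      have h2 : p ∣ 1 := q.reduced ▸ Nat.dvd_gcd h1 hd
      exact hp.out.one_lt.ne' (Nat.dvd_one.mp h2)
    have hnum1 : padicNorm p (q.num : ℚ) = 1 := (padicNorm.int_eq_one_iff _).mpr hnum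
    have hden1 : padicNorm p (q.den : ℚ) < 1 := by
      have := (padicNorm.int_lt_one_iff (q.den : ℤ)).mpr hdvd
      simpa using this
    have hdenpos : 0 < padicNorm p (q.den : ℚ) := by
      have hne : ((q.den : ℚ)) ≠ 0 := by exact_mod_cast q.den_nz
      exact lt_of_le_of_ne (padicNorm.nonneg _) (Ne.symm (padicNorm.nonzero hne))
    rw [← Rat.num_div_den q, padicNorm.div, hnum1] at h
    have : (1 : ℚ) ≤ padicNorm p (q.den : ℚ) := by
      rw [div_le_one hdenpos] at h
      exact h
    exact absurd this (not_le.mpr hden1)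

/-- **Lipshitz–Sylvester, p-local form.** If `p` is a prime, `n` a positive integer and `k` an
integer coprime to `p`, then `(k^n - 1) * Bₙ / n` is `p`-integral: it can be written as a
fraction whose denominator is not divisible by `p`. -/
theorem stmt_16 (p : ℕ) (hp : Nat.Prime p) (n : ℕ) (hn : 0 < n) (k : ℤ)
    (hk : IsCoprime k (p : ℤ)) :
    ∃ a b : ℤ, b ≠ 0 ∧ ¬ (p : ℤ) ∣ b ∧
      ((k : ℚ) ^ n - 1) * bernoulli n / (n : ℚ) = (a : ℚ) / (b : ℚ) := by
  haveI : Fact p.Prime := ⟨hp⟩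
  have hpnot1 : ¬ (p : ℤ) ∣ 1 := by
    intro h
    have h1 : (p : ℤ) = 1 := Int.eq_one_of_dvd_one (by positivity) h
    have : p = 1 := by exact_mod_cast h1
    exact hp.one_lt.ne' this
  rcases Nat.even_or_odd n with hev | hodd
  · -- n even, so n ≥ 2, n ≠ 1
    have hn1 : n ≠ 1 := by rintro rfl; simp at hev
    have hb : bernoulli n = bernoulli' n := bernoulli_eq_bernoulli'_of_ne_one hn1
    have hknz : ¬ p ∣ k.natAbs := by
      intro h
      have h2 : (p : ℤ) ∣ k := Int.natAbs_dvd_natAbs.mp (by simpa using h)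
      have hu := hk.isUnit_of_dvd' h2 dvd_rfl
      rw [Int.isUnit_iff] at hu
      have hge : (0:ℤ) ≤ (p : ℤ) := Int.natCast_nonneg p
      have hone : (p : ℤ) ≠ 1 := by exact_mod_cast hp.one_lt.ne'
      rcases hu with h3 | h3 <;> omega
    have hnorm := LS_norm p k.natAbs hknz (n - 1)
    have hcast : ((n - 1 : ℕ) : ℚ) + 1 = (n : ℚ) := by
      have : n - 1 + 1 = n := Nat.sub_add_cancel hn
      exact_mod_cast congrArg (Nat.cast (R := ℚ)) this
    rw [Nat.sub_add_cancel hn, hcast] at hnorm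
    have habs : ((k.natAbs : ℚ)) ^ n = (k : ℚ) ^ n := by
      have h0 : ((k.natAbs : ℚ)) = |(k : ℚ)| := by
        simp [Nat.cast_natAbs]
      rw [h0]
      exact hev.pow_abs _
    rw [habs] at hnorm
    rw [hb]
    exact LS_exists p hnorm
  · rcases Nat.lt_or_ge n 2 with h2 | h2
    · -- n = 1
      have hn1 : n = 1 := by omega
      subst hn1
      by_cases hp2 : p = 2
      · subst hp2
        have hkodd : Odd k := by
          rcases Int.even_or_odd k with he | ho
          · exfalso
            obtain ⟨t, rfl⟩ := he
            have hd2 : ((2:ℕ):ℤ) ∣ t + t := ⟨t, by push_cast; ring⟩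
            have hu := hk.isUnit_of_dvd' hd2 dvd_rfl
            rw [Int.isUnit_iff] at hu
            rcases hu with h3 | h3 <;> norm_num at h3
          · exact ho
        obtain ⟨t, rfl⟩ := hkodd
        refine ⟨-t, 1, one_ne_zero, hpnot1, ?_⟩
        push_cast
        rw [bernoulli_one]
        ring
      · refine ⟨1 - k, 2, two_ne_zero, ?_, ?_⟩
        · intro h
          have : (p : ℤ) ∣ ((2 : ℕ) : ℤ) := by exact_mod_cast h
          have h4 : p ∣ 2 := Int.ofNat_dvd.mp this
          exact hp2 ((Nat.prime_dvd_prime_iff_eq hp Nat.prime_two).mp h4)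
        · push_cast
          rw [bernoulli_one]
          ring
    · -- n odd, ≥ 3
      have hb : bernoulli n = 0 := by
        rw [bernoulli_eq_bernoulli'_of_ne_one (by omega)]
        exact bernoulli'_eq_zero_of_odd hodd (by omega)
      exact ⟨0, 1, one_ne_zero, hpnot1, by rw [hb]; simp⟩
end
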